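/- arXiv:1710.10043 — 6 statements merged into one kernel-verified Lean document; each statement's English description precedes it below -/
import Mathlib

section
/- Let κ be a regular uncountable cardinal and let F be a filter on κ of size κ, with enumeration X⃗ = ⟨X_α | α < κ⟩ of F. Then F is normal (i.e., for every κ-sequence of elements of F, the diagonal intersection is stationary in κ) if and only if the diagonal intersection △X⃗ is stationary in κ. -/
/-!
Write a `κ`-sequence `Y⃗` from `F` as `Y_α = X_{g(α)}`. Below a closure point `β` of `g`, every
`α < β` has `g(α) < β`, so `β ∈ △X⃗` gives `β ∈ △Y⃗`: on the club `C_g`, `△X⃗ ⊆ △Y⃗`. Since clubs on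
a regular uncountable cardinal are closed under finite intersections, `△Y⃗` meets every club `C`
because `△X⃗` meets `C_g ∩ C`.
-/

universe u

open Cardinal Set

/-- `a` is a limit of elements of `C` (an accumulation point of `C` from below). -/
def IsAccPt' {α : Type u} [LinearOrder α] (C : Set α) (a : α) : Prop :=
  (∃ b, b < a) ∧ ∀ b < a, ∃ c ∈ C, b < c ∧ c < a

/-- `C` is closed and unbounded (club) in the order `α`. -/
def IsClubIn {α : Type u} [LinearOrder α] (C : Set α) : Prop :=
  (∀ a, IsAccPt' C a → a ∈ C) ∧ ∀ a, ∃ c ∈ C, a < c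

/-- `S` is stationary: it meets every club subset. -/
def IsStatIn {α : Type u} [LinearOrder α] (S : Set α) : Prop :=
  ∀ C : Set α, IsClubIn C → (S ∩ C).Nonempty

/-- The diagonal intersection of a sequence of subsets. -/
def diagInter {α : Type u} [LinearOrder α] (X : α → Set α) : Set α :=
  {b | ∀ a < b, b ∈ X a}

/-- `α` is (the order type of) an infinite cardinal `κ`: a well-ordered type in which
every proper initial segment has strictly smaller cardinality. -/
def IsCardType (α : Type u) [LinearOrder α] : Prop :=
  IsWellOrder α (· < ·) ∧ ℵ₀ ≤ #α ∧ ∀ a : α, #(Iio a) < #α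

/-- A filter on `κ` in the sense of Holy–Schlicht: a family of subsets of `κ`
all of whose finite intersections have full cardinality `κ`. -/
def IsFilterOn {α : Type u} (F : Set (Set α)) : Prop :=
  ∀ (n : ℕ) (A : Fin n → Set α), (∀ i, A i ∈ F) → #(⋂ i, A i) = #α

namespace Order

variable {α : Type u} [LinearOrder α]

theorem cof_eq_mk_of_forall_mk_Iio_lt [WellFoundedLT α] (hreg : (#α).IsRegular)
    (hIio : ∀ a : α, #(Iio a) < #α) : cof α = #α := by
  have htype : Ordinal.type (α := α) (· < ·) = (#α).ord := by
    refine le_antisymm (le_of_forall_lt fun o ho => ?_) (ord_le_type _)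
    obtain ⟨a, rfl⟩ := Ordinal.typein_surj _ ho
    exact lt_ord.2 (hIio a)
  rw [← Ordinal.cof_type, htype, hreg.cof_ord]

theorem noMaxOrder_of_one_lt_cof (h : 1 < cof α) : NoMaxOrder α := by
  have : Nonempty α := cof_ne_zero_iff.1 (zero_lt_one.trans h).ne'
  exact (noTopOrder_iff_noMaxOrder α).1 (one_lt_cof_iff.1 h)

theorem exists_forall_lt_of_mk_lt_cof {s : Set α} (hs : #s < cof α) : ∃ b, ∀ x ∈ s, x < b :=
  not_isCofinal_iff.1 fun h => (cof_le h).not_gt hs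

theorem exists_least_strict_upper_bound [WellFoundedLT α] {s : Set α} (hs : #s < cof α) :
    ∃ c, (∀ x ∈ s, x < c) ∧ ∀ b < c, ∃ x ∈ s, b ≤ x := by
  have hne : {c | ∀ x ∈ s, x < c}.Nonempty := exists_forall_lt_of_mk_lt_cof hs
  refine ⟨wellFounded_lt.min _ hne, wellFounded_lt.min_mem _ hne, fun b hb => ?_⟩
  by_contra! h
  exact wellFounded_lt.not_lt_min {c | ∀ x ∈ s, x < c} h hb

end Order

open Order

section Club

variable {α : Type u} [LinearOrder α]

theorem isAccPt'_iff_isLUB_inter_Iio {C : Set α} {a : α} :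
    IsAccPt' C a ↔ (C ∩ Iio a).Nonempty ∧ IsLUB (C ∩ Iio a) a := by
  refine ⟨fun ⟨⟨b, hb⟩, hacc⟩ => ?_, fun ⟨hne, hlub⟩ => ?_⟩
  · obtain ⟨c, hc, -, hca⟩ := hacc b hb
    refine ⟨⟨c, hc, hca⟩, fun x hx => hx.2.le, fun u hu => not_lt.1 fun hua => ?_⟩
    obtain ⟨x, hx, hux, hxa⟩ := hacc u hua
    exact (hu ⟨hx, hxa⟩).not_gt hux
  · obtain ⟨c, -, hca⟩ := hne
    refine ⟨⟨c, hca⟩, fun b hb => ?_⟩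
    obtain ⟨x, ⟨hx, hxa⟩, hbx⟩ := (lt_isLUB_iff hlub).1 hb
    exact ⟨x, hx, hbx, hxa⟩

theorem isClubIn_iff_isClub [NoMaxOrder α] {C : Set α} : IsClubIn C ↔ IsClub C := by
  refine ⟨fun ⟨hclosed, hunbdd⟩ => ⟨?_, fun a => ?_⟩, fun ⟨hclosed, hcof⟩ => ⟨?_, fun a => ?_⟩⟩
  · refine dirSupClosed_iff_of_linearOrder.2 fun d hd hne a ha => ?_
    by_cases had : a ∈ d
    · exact hd had
    have hsub : d ⊆ C ∩ Iio a := fun x hx =>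
      ⟨hd hx, (ha.1 hx).lt_of_ne (ne_of_mem_of_not_mem hx had)⟩
    exact hclosed a (isAccPt'_iff_isLUB_inter_Iio.2
      ⟨hne.mono hsub, fun x hx => hx.2.le, fun u hu => ha.2 fun x hx => hu (hsub hx)⟩)
  · obtain ⟨c, hc, hac⟩ := hunbdd a
    exact ⟨c, hc, hac.le⟩
  · exact fun a ha =>
      dirSupClosed_iff_of_linearOrder.1 hclosed inter_subset_left
        (isAccPt'_iff_isLUB_inter_Iio.1 ha).1 (isAccPt'_iff_isLUB_inter_Iio.1 ha).2
  · obtain ⟨b, hab⟩ := exists_gt a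
    obtain ⟨c, hc, hbc⟩ := hcof b
    exact ⟨c, hc, hab.trans_le hbc⟩

def closurePoints (g : α → α) : Set α :=
  {b | MapsTo g (Iio b) (Iio b)}

theorem isClub_closurePoints [WellFoundedLT α] (hα : ℵ₀ < cof α)
    (hIio : ∀ a : α, #(Iio a) < cof α) (g : α → α) : IsClub (closurePoints g) := by
  refine ⟨dirSupClosed_iff_of_linearOrder.2 fun d hd _ b hb x hx => ?_, fun a => ?_⟩
  · obtain ⟨c, hc, hxc⟩ := (lt_isLUB_iff hb).1 hx
    exact lt_of_lt_of_le (hd hc hxc) (hb.1 hc)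
  · have hsmall : ∀ x, #(insert x (g '' Iio x) : Set α) < cof α := fun x =>
      mk_insert_le.trans_lt <| add_lt_of_lt hα.le (mk_image_le.trans_lt (hIio x))
        (one_lt_aleph0.trans hα)
    choose next hnext using fun x => exists_forall_lt_of_mk_lt_cof (hsmall x)
    have hlt : ∀ x, x < next x := fun x => hnext x x (mem_insert x _)
    have hbound : ∀ x, ∀ y < x, g y < next x := fun x y hy =>
      hnext x _ (mem_insert_of_mem _ ⟨y, hy, rfl⟩)
    -- the limit of the iterates of `next` from `a` is a closure point above `a`
    obtain ⟨c, hub, hlub⟩ := exists_least_strict_upper_bound (s := range (next^[·] a))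
      ((countable_range _).le_aleph0.trans_lt hα)
    refine ⟨c, fun x hx => ?_, (hub _ ⟨0, rfl⟩).le⟩
    obtain ⟨_, ⟨n, rfl⟩, hxn⟩ := hlub x hx
    calc g x < next^[n + 2] a := by
          rw [Function.iterate_succ_apply']
          exact hbound _ x (hxn.trans_lt (by rw [Function.iterate_succ_apply']; exact hlt _))
      _ < c := hub _ ⟨n + 2, rfl⟩

theorem diagInter_inter_closurePoints_subset (X : α → Set α) (g : α → α) :
    diagInter X ∩ closurePoints g ⊆ diagInter (X ∘ g) :=
  fun _ ⟨hX, hg⟩ a ha => hX (g a) (hg ha)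

end Club

theorem normal_iff_diagonal_stationary_general {α : Type u} [LinearOrder α]
    (hcard : IsCardType α) (hreg : (#α).IsRegular) (hunc : ℵ₀ < #α)
    (F : Set (Set α))
    (X : α → Set α) (hmem : ∀ a, X a ∈ F) (hsurj : ∀ A ∈ F, ∃ a, X a = A) :
    (∀ Y : α → Set α, (∀ a, Y a ∈ F) → IsStatIn (diagInter Y)) ↔
      IsStatIn (diagInter X) := by
  obtain ⟨hwo, -, hIio⟩ := hcard
  have : WellFoundedLT α := ⟨hwo.wf⟩
  have hcof := cof_eq_mk_of_forall_mk_Iio_lt hreg hIio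
  rw [← hcof] at hunc hIio
  have := noMaxOrder_of_one_lt_cof (one_lt_aleph0.trans hunc)
  refine ⟨fun h => h X hmem, fun hX Y hY C hC => ?_⟩
  choose g hg using fun a => hsurj (Y a) (hY a)
  have hclub : IsClubIn (closurePoints g ∩ C) := isClubIn_iff_isClub.2 <|
    (isClub_closurePoints hunc hIio g).inter hunc.ne' (isClubIn_iff_isClub.1 hC)
  obtain ⟨b, hbX, hbg, hbC⟩ := hX _ hclub
  refine ⟨b, ?_, hbC⟩
  rw [← funext hg]
  exact diagInter_inter_closurePoints_subset X g ⟨hbX, hbg⟩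

/-- **Lemma 2.6** (Holy–Schlicht). A filter `F` of size `κ` on a regular uncountable
cardinal `κ`, with enumeration `⟨X_α | α < κ⟩`, is normal (every diagonal intersection of a
`κ`-sequence of its elements is stationary) if and only if the diagonal intersection of the
enumeration is stationary. -/
theorem normal_iff_diagonal_stationary {α : Type u} [LinearOrder α]
    (hcard : IsCardType α) (hreg : (#α).IsRegular) (hunc : ℵ₀ < #α)
    (F : Set (Set α)) (hF : IsFilterOn F) (hsize : #F = #α)
    (X : α → Set α) (hmem : ∀ a, X a ∈ F) (hsurj : ∀ A ∈ F, ∃ a, X a = A) :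
    (∀ Y : α → Set α, (∀ a, Y a ∈ F) → IsStatIn (diagInter Y)) ↔
      IsStatIn (diagInter X) :=
  normal_iff_diagonal_stationary_general hcard hreg hunc F X hmem hsurj
end

section
/- Let κ be a weakly compact cardinal. Then κ has the filter extension property: for every <κ-complete filter F on κ of size at most κ and every X ⊆ P(κ) of size at most κ, there is a <κ-complete filter F̄ ⊇ F that measures every element of X. -/
universe u

open Cardinal Set

/-- A `<κ`-complete filter on `κ`: every intersection of fewer than `κ` many members
has cardinality `κ`. -/
def IsCompleteFilterOn {α : Type u} (F : Set (Set α)) : Prop :=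
  ∀ (ι : Type u) (A : ι → Set α), #ι < #α → (∀ i, A i ∈ F) → #(⋂ i, A i) = #α

/-- `g : κ → 2` is a cofinal branch through the tree `T` of binary sequences on `κ`
(nodes at level `a` are represented by functions, identified up to their values below `a`). -/
def IsBranchThrough {α : Type u} [LinearOrder α] (T : Set (α × (α → Bool)))
    (g : α → Bool) : Prop :=
  ∀ a : α, ∃ t, (a, t) ∈ T ∧ ∀ c < a, t c = g c

/-- The tree property for `κ`, formulated for trees of binary sequences on `κ`:
every downward-closed tree with nonempty levels has a cofinal branch. -/
def HasTreeProperty (α : Type u) [LinearOrder α] : Prop :=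
  ∀ T : Set (α × (α → Bool)),
    (∀ p ∈ T, ∀ a ≤ p.1, ∀ t : α → Bool, (∀ c < a, t c = p.2 c) → (a, t) ∈ T) →
    (∀ a : α, ∃ t, (a, t) ∈ T) →
    ∃ g, IsBranchThrough T g

/-!
Enumerate `F` as `⟨A_i⟩` and `X` as `⟨B_i⟩`, and take the tree of those `t : a → 2` for which
`⋂_{i<a} A_i ∩ B_{i,t(i)}` still has size `κ`. Its levels are nonempty because `κ` is a strong
limit: the `2^|a| < κ` such sets cover the large set `⋂_{i<a} A_i`, so by regularity one of them
is large. A branch `g` yields the extension `{A_i} ∪ {B_{i,g(i)}}`: fewer than `κ` of its members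
have indices bounded by some `a < κ`, so their intersection contains the large set of the node
of `g` at level `a`.
-/

section

variable {α : Type u}

lemma mk_eq_of_subset {s t : Set α} (h : s ⊆ t) (hs : #s = #α) : #t = #α :=
  le_antisymm (mk_set_le t) (hs ▸ mk_le_mk_of_subset h)

lemma exists_mk_eq_of_mk_iUnion_eq (hreg : (#α).IsRegular) {ι : Type u} (hι : #ι < #α)
    {s : ι → Set α} (h : #(⋃ i, s i) = #α) : ∃ i, #(s i) = #α := by
  by_contra! hs
  exact ((card_iUnion_lt_iff_forall_of_isRegular hreg hι).2
    fun i => (mk_set_le _).lt_of_ne (hs i)).ne h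

lemma exists_forall_lt_of_mk_lt [LinearOrder α] (hreg : (#α).IsRegular)
    (hIio : ∀ a : α, #(Iio a) < #α) {ι : Type u} (hι : #ι < #α) (f : ι → α) :
    ∃ a, ∀ i, f i < a := by
  by_contra! hf
  have hIic : ∀ i, #(Iic (f i)) < #α := fun i => by
    rw [← Iio_insert]
    exact mk_insert_le.trans_lt <| add_lt_of_lt hreg.aleph0_le (hIio _)
      (one_lt_aleph0.trans_le hreg.aleph0_le)
  have hcover : ⋃ i, Iic (f i) = Set.univ := eq_univ_of_forall fun x => mem_iUnion.2 (hf x)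
  have := (card_iUnion_lt_iff_forall_of_isRegular hreg hι).2 hIic
  rw [hcover, mk_univ] at this
  exact this.false

lemma exists_subset_range_subset_insert {β : Type u} {S : Set β} (h : #S ≤ #α) (d : β) :
    ∃ e : α → β, S ⊆ range e ∧ range e ⊆ insert d S := by
  rcases S.eq_empty_or_nonempty with rfl | hS
  · exact ⟨fun _ => d, empty_subset _, range_subset_iff.2 fun _ => mem_insert d ∅⟩
  · have : Nonempty S := hS.to_subtype
    obtain ⟨f⟩ := h
    refine ⟨fun a => ((Function.invFun f a : S) : β), fun s hs => ?_,
      range_subset_iff.2 fun a => mem_insert_of_mem d (Function.invFun f a).2⟩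
    obtain ⟨a, ha⟩ := Function.invFun_surjective f.injective ⟨s, hs⟩
    exact ⟨a, congrArg Subtype.val ha⟩

lemma IsCompleteFilterOn.insert_univ {F : Set (Set α)} (hF : IsCompleteFilterOn F) :
    IsCompleteFilterOn (insert Set.univ F) := by
  intro ι A hι hA
  refine mk_eq_of_subset (fun x hx => mem_iInter.2 fun i => ?_)
    (hF {i // A i ∈ F} (A ·) ((mk_subtype_le _).trans_lt hι) Subtype.prop)
  rcases hA i with h | h
  · exact h ▸ mem_univ x
  · exact mem_iInter.1 hx ⟨i, h⟩

variable [LinearOrder α] {A B : α → Set α}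

/-- `bif b then (B i)ᶜ else B i` is the paper's `B_{i,b}`. -/
def nodeSet (A B : α → Set α) (a : α) (t : α → Bool) : Set α :=
  ⋂ i : Iio a, A i ∩ bif t i then (B i)ᶜ else B i

@[simp]
lemma mem_nodeSet {a : α} {t : α → Bool} {x : α} :
    x ∈ nodeSet A B a t ↔ ∀ i < a, x ∈ A i ∧ x ∈ bif t i then (B i)ᶜ else B i := by
  simp [nodeSet]

lemma nodeSet_subset_of_lt {a i : α} {t : α → Bool} (hi : i < a) :
    nodeSet A B a t ⊆ A i ∩ bif t i then (B i)ᶜ else B i :=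
  fun _ hx => mem_nodeSet.1 hx i hi

lemma nodeSet_subset_nodeSet {a b : α} {s t : α → Bool} (hab : a ≤ b)
    (hst : ∀ c < a, s c = t c) : nodeSet A B b t ⊆ nodeSet A B a s := fun _ hx =>
  mem_nodeSet.2 fun i hi => hst i hi ▸ mem_nodeSet.1 hx i (hi.trans_le hab)

lemma exists_mk_nodeSet_eq {G : Set (Set α)} (hG : IsCompleteFilterOn G) (hA : ∀ i, A i ∈ G)
    (hreg : (#α).IsRegular) (hlim : (#α).IsStrongLimit) (hIio : ∀ a : α, #(Iio a) < #α)
    (B : α → Set α) (a : α) : ∃ t, #(nodeSet A B a t) = #α := by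
  classical
  let extend (s : Iio a → Bool) (i : α) : Bool := if h : i < a then s ⟨i, h⟩ else false
  have hcover : ⋂ i : Iio a, A i ⊆ ⋃ s, nodeSet A B a (extend s) := fun x hx =>
    mem_iUnion.2 ⟨fun i => decide (x ∉ B i), mem_nodeSet.2 fun i hi =>
      ⟨mem_iInter.1 hx ⟨i, hi⟩, by by_cases hxB : x ∈ B i <;> simp [extend, hi, hxB]⟩⟩
  have hsmall : #(Iio a → Bool) < #α := by
    rw [mk_arrow]
    simpa using hlim.isStrongPrelimit (hIio a)
  obtain ⟨s, hs⟩ := exists_mk_eq_of_mk_iUnion_eq hreg hsmall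
    (mk_eq_of_subset hcover (hG _ _ (hIio a) (hA ·)))
  exact ⟨_, hs⟩

lemma isCompleteFilterOn_of_isBranchThrough (hreg : (#α).IsRegular)
    (hIio : ∀ a : α, #(Iio a) < #α) {g : α → Bool}
    (hg : IsBranchThrough {p | #(nodeSet A B p.1 p.2) = #α} g) :
    IsCompleteFilterOn (range A ∪ range fun i => bif g i then (B i)ᶜ else B i) := by
  intro ι C hι hC
  have hbelow : ∀ j, ∃ i, A i ∩ (bif g i then (B i)ᶜ else B i) ⊆ C j := fun j => by
    rcases hC j with ⟨i, hi⟩ | ⟨i, hi⟩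
    · exact ⟨i, hi ▸ inter_subset_left⟩
    · exact ⟨i, hi ▸ inter_subset_right⟩
  choose idx hidx using hbelow
  obtain ⟨a, ha⟩ := exists_forall_lt_of_mk_lt hreg hIio hι idx
  obtain ⟨t, ht, htg⟩ := hg a
  refine mk_eq_of_subset (subset_iInter fun j => ?_) ht
  have hsub := nodeSet_subset_of_lt (A := A) (B := B) (t := t) (ha j)
  rw [htg _ (ha j)] at hsub
  exact hsub.trans (hidx j)

end

/-- **Proposition 2.9** (Holy–Schlicht). Every weakly compact cardinal (inaccessible with
the tree property) has the filter extension property: every `<κ`-complete filter of size at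
most `κ` extends to a `<κ`-complete filter measuring any prescribed `κ`-sized family of
subsets of `κ`. -/
theorem weakly_compact_filter_extension {α : Type u} [LinearOrder α]
    (hcard : IsCardType α) (hinacc : (#α).IsInaccessible) (htree : HasTreeProperty α)
    (F : Set (Set α)) (hF : IsCompleteFilterOn F) (hFsize : #F ≤ #α)
    (X : Set (Set α)) (hX : #X ≤ #α) :
    ∃ G : Set (Set α), F ⊆ G ∧ IsCompleteFilterOn G ∧
      ∀ A ∈ X, A ∈ G ∨ Aᶜ ∈ G := by
  obtain ⟨-, -, hIio⟩ := hcard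
  have hreg := hinacc.isRegular
  obtain ⟨A, hFA, hAF⟩ := exists_subset_range_subset_insert hFsize Set.univ
  obtain ⟨B, hXB, -⟩ := exists_subset_range_subset_insert hX Set.univ
  obtain ⟨g, hg⟩ := htree {p | #(nodeSet A B p.1 p.2) = #α}
    (fun p hp a ha t ht => mk_eq_of_subset (nodeSet_subset_nodeSet ha ht) hp)
    (exists_mk_nodeSet_eq hF.insert_univ (fun i => hAF ⟨i, rfl⟩) hreg hinacc.isStrongLimit
      hIio B)
  refine ⟨range A ∪ range fun i => bif g i then (B i)ᶜ else B i, hFA.trans subset_union_left,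
    isCompleteFilterOn_of_isBranchThrough hreg hIio hg, ?_⟩
  rintro _ hB
  obtain ⟨i, rfl⟩ := hXB hB
  cases hgi : g i
  · exact .inl (.inr ⟨i, by simp [hgi]⟩)
  · exact .inr (.inr ⟨i, by simp [hgi]⟩)
end

section
/- Let κ be a regular uncountable cardinal and let S = {α < κ | cof(α) = ω}. Suppose M is a weak κ-model (a transitive set of size κ with κ+1 ⊆ M modelling ZFC minus powerset) with S ∈ M, in which κ is inaccessible, and suppose F is a normal filter on κ with S ∈ F that measures P(κ) ∩ M. Then the ultrapower of M by F ∩ M is well-founded and κ is represented by the identity function, and in the ultrapower κ has cofinality ω; hence there is no such F when the ultrapower must model that κ is inaccessible — i.e., the normal filter extension property fails at κ. -/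
universe u

open Cardinal Set

/-- A normal filter: any diagonal intersection of a `κ`-sequence of members is stationary. -/
def IsNormalFilterOn {α : Type u} [LinearOrder α] (F : Set (Set α)) : Prop :=
  IsFilterOn F ∧ ∀ Y : α → Set α, (∀ a, Y a ∈ F) → IsStatIn (diagInter Y)

/-!
Let `S` be the set of points of cofinality `ω`, fix for each `b ∈ S` a ladder `ℓ_b : ℕ → b`
cofinal in `b`, and extend the normal filter `{S}` to a normal `G` measuring the sets
`{b | b ∈ S → ℓ_b n = a}`. For each `n` the map `b ↦ ℓ_b n` is regressive on `S`, so a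
pressing-down argument against normality puts one of its fibres, say over `a n`, into `G`.
Normality also makes countably many members of `G` meet above any given point; a point
`b` above `sup a n` lying in `S` and in all these fibres has a ladder bounded by
`sup a n < b`, which is absurd.
-/

/-- `S^κ_ω`, the points of cofinality `ω`. -/
def omegaCof (α : Type u) [LinearOrder α] : Set α :=
  {b | ∃ c : ℕ → α, (∀ n, c n < b) ∧ ∀ x < b, ∃ n, x < c n}

section LinearOrder

variable {α : Type u} [LinearOrder α]

theorem cof_eq_mk_of_isRegular [WellFoundedLT α] (hreg : (#α).IsRegular)
    (hIio : ∀ a : α, #(Iio a) < #α) : Order.cof α = #α := by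
  have htype : Ordinal.type (α := α) (· < ·) = (#α).ord := by
    refine le_antisymm (le_of_forall_lt fun o ho => ?_) (ord_le_type _)
    obtain ⟨a, rfl⟩ := Ordinal.typein_surj _ ho
    exact lt_ord.2 ((Ordinal.card_typein a).trans_lt (hIio a))
  rw [← Ordinal.cof_type, htype, hreg.cof_ord]

theorem exists_forall_lt_of_mk_lt_cof {s : Set α} (hs : #s < Order.cof α) :
    ∃ x, ∀ b ∈ s, b < x := by
  by_contra! h
  exact (Order.cof_le fun x => h x).not_gt hs

theorem exists_forall_lt_of_countable (hcof : ℵ₀ < Order.cof α) {s : Set α}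
    (hs : s.Countable) : ∃ x, ∀ b ∈ s, b < x :=
  exists_forall_lt_of_mk_lt_cof (hs.le_aleph0.trans_lt hcof)

theorem noMaxOrder_of_aleph0_lt_cof (hcof : ℵ₀ < Order.cof α) : NoMaxOrder α :=
  ⟨fun a => (exists_forall_lt_of_countable hcof (countable_singleton a)).imp
    fun _ hx => hx a rfl⟩

theorem infinite_of_aleph0_lt_cof (hcof : ℵ₀ < Order.cof α) : Infinite α :=
  infinite_iff.2 (hcof.le.trans (Order.cof_le_cardinalMk α))

theorem isClubIn_Ioi [NoMaxOrder α] (m : α) : IsClubIn (Ioi m) := by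
  refine ⟨fun a ⟨⟨b, hb⟩, hacc⟩ => ?_, fun a => ?_⟩
  · obtain ⟨c, hc, -, hca⟩ := hacc b hb
    exact lt_trans hc hca
  · obtain ⟨c, hc⟩ := exists_gt (max a m)
    exact ⟨c, (le_max_right a m).trans_lt hc, (le_max_left a m).trans_lt hc⟩

theorem IsStatIn.mono {S T : Set α} (hST : S ⊆ T) (hS : IsStatIn S) : IsStatIn T :=
  fun C hC => (hS C hC).mono (inter_subset_inter_left C hST)

theorem IsStatIn.mk_eq [NoMaxOrder α] (hcof : Order.cof α = #α) {S : Set α}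
    (hS : IsStatIn S) : #S = #α := by
  refine le_antisymm (mk_set_le S) (not_lt.1 fun hlt => ?_)
  obtain ⟨x, hx⟩ := exists_forall_lt_of_mk_lt_cof (hcof ▸ hlt)
  obtain ⟨b, hbS, hxb⟩ := hS _ (isClubIn_Ioi x)
  exact (hx b hbS).not_gt hxb

theorem isStatIn_omegaCof [WellFoundedLT α] (hcof : ℵ₀ < Order.cof α) :
    IsStatIn (omegaCof α) := by
  have := infinite_of_aleph0_lt_cof hcof
  rintro C ⟨hclosed, hunbdd⟩
  choose next hnextC hlt_next using hunbdd
  obtain ⟨a₀⟩ : Nonempty α := inferInstance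
  set g : ℕ → α := fun n => next^[n + 1] a₀
  have hgC (n : ℕ) : g n ∈ C := by
    simp only [g, Function.iterate_succ_apply']
    exact hnextC _
  have hg_succ (n : ℕ) : g n < g (n + 1) := by
    simp only [g, Function.iterate_succ_apply' next (n + 1)]
    exact hlt_next _
  -- The least strict upper bound `s` of `g` is a limit of `C`, and `g` is a ladder for it.
  set U := {x | ∀ n, g n < x}
  have hU : U.Nonempty :=
    (exists_forall_lt_of_countable hcof (countable_range g)).imp fun _ hx n => hx _ ⟨n, rfl⟩
  set s := (wellFounded_lt (α := α)).min U hU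
  have hgs : ∀ n, g n < s := wellFounded_lt.min_mem U hU
  have hs_least (x : α) (hx : x < s) : ∃ n, x < g n := by
    by_contra! h
    exact wellFounded_lt.not_lt_min U (fun n => (h (n + 1)).trans_lt' (hg_succ n)) hx
  refine ⟨s, ⟨g, hgs, hs_least⟩, hclosed s ⟨⟨g 0, hgs 0⟩, fun x hx => ?_⟩⟩
  obtain ⟨n, hn⟩ := hs_least x hx
  exact ⟨g n, hgC n, hn, hgs n⟩

theorem isNormalFilterOn_singleton {S : Set α} (hS : IsStatIn S) (hmk : #S = #α) :
    IsNormalFilterOn ({S} : Set (Set α)) := by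
  refine ⟨fun n A hA => ?_, fun Y hY => hS.mono fun b hb a _ => (hY a).symm ▸ hb⟩
  obtain rfl : A = fun _ => S := funext hA
  rcases n with _ | n
  · simp
  · rw [iInter_const, hmk]

/-- Fodor's pressing-down lemma, in the form available for normal filters. -/
theorem IsNormalFilterOn.exists_fiber_mem [Nonempty α] [NoMaxOrder α] {G : Set (Set α)}
    (hG : IsNormalFilterOn G) {S : Set α} {f : α → α} (hf : ∀ b ∈ S, f b < b)
    (hmeas : ∀ a, {b | b ∈ S → f b = a} ∈ G ∨ {b | b ∈ S → f b = a}ᶜ ∈ G) :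
    ∃ a, {b | b ∈ S → f b = a} ∈ G := by
  by_contra! h
  obtain ⟨m⟩ := ‹Nonempty α›
  obtain ⟨b, hb, hmb⟩ := hG.2 _ (fun a => (hmeas a).resolve_left (h a)) _ (isClubIn_Ioi m)
  have hbS : b ∈ S := by
    by_contra hbS
    exact hb m hmb fun h => absurd h hbS
  exact hb (f b) (hf b hbS) fun _ => rfl

theorem IsNormalFilterOn.exists_gt_forall_mem {G : Set (Set α)} (hG : IsNormalFilterOn G)
    (hcof : ℵ₀ < Order.cof α) {ι : Type*} [Countable ι] (D : ι → Set α)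
    (hD : ∀ i, D i ∈ G) (m : α) : ∃ b, m < b ∧ ∀ i, b ∈ D i := by
  have := noMaxOrder_of_aleph0_lt_cof hcof
  have := infinite_of_aleph0_lt_cof hcof
  cases isEmpty_or_nonempty ι
  · obtain ⟨b, hb⟩ := exists_gt m
    exact ⟨b, hb, isEmptyElim⟩
  -- Index `D` along an injection `e : ι → α` and diagonally intersect above all `e i` and `m`.
  obtain ⟨j, hj⟩ := exists_injective_nat ι
  set e : ι → α := Infinite.natEmbedding α ∘ j
  have he : e.Injective := (Infinite.natEmbedding α).injective.comp hj
  obtain ⟨x, hx⟩ := exists_forall_lt_of_countable hcof ((countable_range e).insert m)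
  obtain ⟨b, hb, hxb⟩ :=
    hG.2 (fun a => D (Function.invFun e a)) (fun a => hD _) _ (isClubIn_Ioi x)
  refine ⟨b, (hx m (mem_insert m _)).trans hxb, fun i => ?_⟩
  have hib : b ∈ D (Function.invFun e (e i)) :=
    hb (e i) ((hx (e i) (mem_insert_of_mem m ⟨i, rfl⟩)).trans hxb)
  rwa [Function.leftInverse_invFun he i] at hib

end LinearOrder

/-- **Proposition 2.10** (Holy–Schlicht). The normal filter extension property fails at
every regular uncountable cardinal `κ`: it is not the case that every normal filter on `κ`
of size at most `κ` can be extended to a normal filter measuring any prescribed `κ`-sized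
family of subsets of `κ`.  (The proof starts from the normal filter `{S^κ_ω}` and a
suitable `κ`-model `M`; any normal extension measuring `P(κ) ∩ M` induces a well-founded
ultrapower of `M` in which `κ`, represented by the identity, has cofinality `ω`,
contradicting inaccessibility of `κ` in `M`.) -/
theorem normal_filter_extension_fails {α : Type u} [LinearOrder α]
    (hcard : IsCardType α) (hreg : (#α).IsRegular) (hunc : ℵ₀ < #α) :
    ¬ (∀ F : Set (Set α), IsNormalFilterOn F → #F ≤ #α →
        ∀ X : Set (Set α), #X ≤ #α →
          ∃ G : Set (Set α), F ⊆ G ∧ IsNormalFilterOn G ∧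
            ∀ A ∈ X, A ∈ G ∨ Aᶜ ∈ G) := by
  intro hext
  have := hcard.1
  have hcof_eq : Order.cof α = #α := cof_eq_mk_of_isRegular hreg hcard.2.2
  have hcof : ℵ₀ < Order.cof α := hcof_eq ▸ hunc
  have := noMaxOrder_of_aleph0_lt_cof hcof
  have := infinite_of_aleph0_lt_cof hcof
  set S := omegaCof α
  have hS : IsStatIn S := isStatIn_omegaCof hcof
  choose! ladder hladder_lt hladder_cof using fun b (hb : b ∈ S) => hb
  set fiber : ℕ → α → Set α := fun n a => {b | b ∈ S → ladder b n = a}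
  have hXcard : #(range (Function.uncurry fiber)) ≤ #α :=
    mk_range_le.trans (by simp [aleph0_mul_eq hcard.2.1])
  obtain ⟨G, hSG, hG, hmeas⟩ := hext {S} (isNormalFilterOn_singleton hS (hS.mk_eq hcof_eq))
    (by simpa using one_le_aleph0.trans hcard.2.1) _ hXcard
  choose a ha using fun n => hG.exists_fiber_mem (fun b hb => hladder_lt b hb n)
    fun a => hmeas _ ⟨(n, a), rfl⟩
  obtain ⟨x, hx⟩ := exists_forall_lt_of_countable hcof (countable_range a)
  obtain ⟨b, hxb, hb⟩ := hG.exists_gt_forall_mem hcof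
    (fun i : Option ℕ => i.elim S fun n => fiber n (a n))
    (fun i => i.rec (hSG rfl) ha) x
  have hbS : b ∈ S := hb none
  obtain ⟨n, hn⟩ := hladder_cof b hbS x hxb
  rw [hb (some n) hbS] at hn
  exact (hx _ ⟨n, rfl⟩).not_gt hn
end

section
/- Let κ be an uncountable cardinal. In the two-player game of length ω where players I and II alternately play a ⊆-decreasing sequence of subsets of κ each of cardinality κ (Player I moving first), with Player II winning iff the intersection of all played sets has cardinality κ, Player I has a winning strategy: at each of his turns he plays the set obtained from Player II's last set by deleting the least element of each ω-block of its increasing enumeration. -/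
universe u

open Cardinal Set

/-- The moves `f 0, …, f (n-1)` form a legal position in the Schreier game on `κ`:
a ⊆-decreasing sequence of subsets of `κ`, each of cardinality `κ`. -/
def LegalMove {α : Type u} (f : ℕ → Set α) (n : ℕ) : Prop :=
  #(f n) = #α ∧ ∀ m < n, f n ⊆ f m

/-! The index of an element in the increasing enumeration of the current set can only drop when
passing to a subset, and drops strictly at each move of player I: the elements he keeps have
successor indices `ξ + 1`, and in the new set they are enumerated at index at most `ξ`. So an
element lying in every move would give an infinite descending sequence of ordinals. Player I's
move still has size `κ`: in a set of size `κ` whose proper initial segments are smaller, the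
indices form the limit ordinal `κ`, so `ξ ↦ ξ + 1` injects the set into the kept part. -/

theorem Ordinal.typein_le_of_strictMono {β : Type u} [LinearOrder β] [WellFoundedLT β]
    {g : β → Ordinal.{u}} (hg : StrictMono g) (b : β) :
    typein ((· < ·) : β → β → Prop) b ≤ g b := by
  induction b using WellFoundedLT.induction with
  | _ b ih =>
    by_contra! hgb
    set c := enum ((· < ·) : β → β → Prop) ⟨g b, hgb.trans (typein_lt_type _ b)⟩
    have hc : typein ((· < ·) : β → β → Prop) c = g b := typein_enum _ _
    have hcb : c < b := (typein_lt_typein _).1 (hc ▸ hgb)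
    exact (ih c hcb).not_gt (hc ▸ hg hcb)

section DeleteBlockMins

open scoped Ordinal

variable {α : Type u} [LinearOrder α] [WellFoundedLT α]

noncomputable def enumIndex (A : Set α) (a : A) : Ordinal.{u} :=
  Ordinal.typein ((· < ·) : A → A → Prop) a

/-- The multiples of `ω` are the indices of the least elements of the `ω`-blocks
`[ω · γ, ω · (γ + 1))`. -/
def deleteBlockMins (A : Set α) : Set α :=
  {a | ∃ h : a ∈ A, ¬ ω ∣ enumIndex A ⟨a, h⟩}

theorem deleteBlockMins_subset (A : Set α) : deleteBlockMins A ⊆ A :=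
  fun _ h => h.1

theorem enumIndex_strictMono (A : Set α) : StrictMono (enumIndex A) :=
  fun _ _ h => (Ordinal.typein_lt_typein _).2 h

theorem enumIndex_le_of_subset {A B : Set α} (h : B ⊆ A) {a : α} (ha : a ∈ B) :
    enumIndex B ⟨a, ha⟩ ≤ enumIndex A ⟨a, h ha⟩ :=
  Ordinal.typein_le_of_strictMono
    (g := enumIndex A ∘ Set.inclusion h)
    ((enumIndex_strictMono A).comp fun _ _ hxy => hxy) ⟨a, ha⟩

theorem enumIndex_deleteBlockMins_lt {A : Set α} {a : α} (ha : a ∈ deleteBlockMins A) :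
    enumIndex (deleteBlockMins A) ⟨a, ha⟩ < enumIndex A ⟨a, ha.1⟩ := by
  let ι : deleteBlockMins A → A := Set.inclusion (deleteBlockMins_subset A)
  have hsucc (x : deleteBlockMins A) :
      Order.succ (Ordinal.pred (enumIndex A (ι x))) = enumIndex A (ι x) :=
    Ordinal.succ_pred_eq_iff_not_isSuccPrelimit.2
      (Ordinal.isSuccPrelimit_iff_omega0_dvd.not.2 x.2.2)
  have hpred : StrictMono fun x => Ordinal.pred (enumIndex A (ι x)) := by
    intro x y hxy
    rw [← Order.succ_lt_succ_iff, hsucc, hsucc]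
    exact enumIndex_strictMono A hxy
  calc enumIndex (deleteBlockMins A) ⟨a, ha⟩
      ≤ Ordinal.pred (enumIndex A ⟨a, ha.1⟩) := Ordinal.typein_le_of_strictMono hpred ⟨a, ha⟩
    _ < enumIndex A ⟨a, ha.1⟩ := by
      rw [Ordinal.pred_lt_iff_not_isSuccPrelimit, Ordinal.isSuccPrelimit_iff_omega0_dvd]
      exact ha.2

theorem enumIndex_lt_of_subset_deleteBlockMins {A B : Set α} (h : B ⊆ deleteBlockMins A)
    {a : α} (ha : a ∈ B) : enumIndex B ⟨a, ha⟩ < enumIndex A ⟨a, (h ha).1⟩ :=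
  (enumIndex_le_of_subset h ha).trans_lt (enumIndex_deleteBlockMins_lt (h ha))

theorem iInter_eq_empty_of_subset_deleteBlockMins {A : ℕ → Set α}
    (hA : ∀ n, A (n + 1) ⊆ deleteBlockMins (A n)) : ⋂ n, A n = ∅ := by
  refine Set.eq_empty_of_forall_notMem fun a ha => ?_
  have hmem : ∀ n, a ∈ A n := Set.mem_iInter.1 ha
  exact not_strictAnti_of_wellFoundedLT (fun n => enumIndex (A n) ⟨a, hmem n⟩)
    (strictAnti_nat_of_succ_lt fun n => enumIndex_lt_of_subset_deleteBlockMins (hA n) _)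

theorem mk_deleteBlockMins {A : Set α} (hA : ℵ₀ ≤ #A) (hsmall : ∀ x : A, #(Iio x) < #A) :
    #(deleteBlockMins A) = #A := by
  refine le_antisymm (mk_le_mk_of_subset (deleteBlockMins_subset A)) ?_
  have hlt (x : A) : Order.succ (enumIndex A x) < Ordinal.type ((· < ·) : A → A → Prop) := by
    have hx : enumIndex A x < (#A).ord := lt_ord.2 ((Ordinal.card_typein x).trans_lt (hsmall x))
    refine ((isSuccLimit_ord hA).succ_lt hx).trans_le ?_
    simpa only [Ordinal.card_type] using ord_card_le (Ordinal.type ((· < ·) : A → A → Prop))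
  let next (x : A) : A := Ordinal.enum ((· < ·) : A → A → Prop) ⟨Order.succ (enumIndex A x), hlt x⟩
  have hnext (x : A) : enumIndex A (next x) = Order.succ (enumIndex A x) :=
    Ordinal.typein_enum _ _
  have hkept (x : A) : (next x : α) ∈ deleteBlockMins A :=
    ⟨(next x).2, by
      rw [Subtype.coe_eta, hnext, ← Ordinal.isSuccPrelimit_iff_omega0_dvd]
      exact Order.not_isSuccPrelimit_succ _⟩
  refine mk_le_of_injective (f := fun x => (⟨next x, hkept x⟩ : deleteBlockMins A)) ?_
  intro x y hxy
  have := congrArg (enumIndex A) (Subtype.ext (Subtype.mk.inj hxy) : next x = next y)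
  rw [hnext, hnext] at this
  exact (enumIndex_strictMono A).injective (Order.succ_injective this)

theorem mk_deleteBlockMins_of_mk_eq (hinf : ℵ₀ ≤ #α) (hsmall : ∀ a : α, #(Iio a) < #α)
    {A : Set α} (hA : #A = #α) : #(deleteBlockMins A) = #α := by
  rw [← hA]
  refine mk_deleteBlockMins (hA ▸ hinf) fun x => ?_
  calc #(Iio x) = #(Subtype.val '' Iio x) := (mk_image_eq Subtype.val_injective).symm
    _ ≤ #(Iio (x : α)) := mk_le_mk_of_subset <| image_subset_iff.2 fun _ hy => hy
    _ < #A := hA ▸ hsmall x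

def schreierStrategy : ∀ n : ℕ, (Fin n → Set α) → Set α
  | 0, _ => univ
  | n + 1, p => deleteBlockMins (p (Fin.last n))

end DeleteBlockMins

theorem schreier_player_one_wins_general {α : Type u} [LinearOrder α]
    (hcard : IsCardType α) :
    ∃ σ : ∀ n : ℕ, (Fin n → Set α) → Set α,
      (∀ (f : ℕ → Set α) (n : ℕ), (∀ m < 2 * n, LegalMove f m) →
        (#(σ (2 * n) (fun i => f i)) = #α ∧
          ∀ m < 2 * n, σ (2 * n) (fun i => f i) ⊆ f m)) ∧
      (∀ f : ℕ → Set α, (∀ n, f (2 * n) = σ (2 * n) (fun i : Fin (2 * n) => f i)) →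
        (∀ n, LegalMove f n) → #(⋂ n, f n) ≠ #α) := by
  obtain ⟨hwo, hinf, hsmall⟩ := hcard
  have : WellFoundedLT α := hwo.toIsWellFounded
  refine ⟨schreierStrategy, fun f n hlegal => ?_, fun f hplay hlegal hinter => ?_⟩
  · cases n with
    | zero => exact ⟨mk_univ, fun m hm => absurd hm (Nat.not_lt_zero m)⟩
    | succ k =>
      obtain ⟨hsize, hsub⟩ := hlegal (2 * k + 1) (by omega)
      refine ⟨mk_deleteBlockMins_of_mk_eq hinf hsmall hsize, fun m hm => ?_⟩
      rcases Nat.lt_or_ge m (2 * k + 1) with hlt | hge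
      · exact (deleteBlockMins_subset _).trans (hsub m hlt)
      · obtain rfl : m = 2 * k + 1 := by omega
        exact deleteBlockMins_subset _
  · have hmove (n : ℕ) : f (2 * n + 2) = deleteBlockMins (f (2 * n + 1)) := hplay (n + 1)
    have hempty : ⋂ n, f (2 * n + 1) = ∅ :=
      iInter_eq_empty_of_subset_deleteBlockMins fun n =>
        (hmove n).symm ▸ (hlegal (2 * n + 3)).2 (2 * n + 2) (by omega)
    have hzero : #(⋂ n, f n) = 0 :=
      mk_set_eq_zero_iff.2 (subset_empty_iff.1
        (hempty ▸ subset_iInter fun n => iInter_subset f (2 * n + 1)))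
    exact (aleph0_pos.trans_le hinf).ne (hzero ▸ hinter)

/-- **Proposition 2.12** (Schreier; see Holy–Schlicht). Let `κ` be an uncountable cardinal.
In the game of length `ω` in which players I and II alternately play a ⊆-decreasing
sequence of subsets of `κ` of cardinality `κ` (player I playing the moves of even index),
player II winning iff the intersection of all moves has cardinality `κ`, player I has a
winning strategy: a strategy that always produces legal moves against legal play, and such
that in any run in which player I follows it and all moves are legal, the intersection of
the played sets does not have cardinality `κ`. -/
theorem schreier_player_one_wins {α : Type u} [LinearOrder α]
    (hcard : IsCardType α) (hunc : ℵ₀ < #α) :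
    ∃ σ : ∀ n : ℕ, (Fin n → Set α) → Set α,
      (∀ (f : ℕ → Set α) (n : ℕ), (∀ m < 2 * n, LegalMove f m) →
        (#(σ (2 * n) (fun i => f i)) = #α ∧
          ∀ m < 2 * n, σ (2 * n) (fun i => f i) ⊆ f m)) ∧
      (∀ f : ℕ → Set α, (∀ n, f (2 * n) = σ (2 * n) (fun i : Fin (2 * n) => f i)) →
        (∀ n, LegalMove f n) → #(⋂ n, f n) ≠ #α) :=
  schreier_player_one_wins_general hcard
end

section
/- Let M be a transitive model of ZFC minus powerset, and let j : M → N be an elementary embedding with critical point κ such that κ+1 ⊆ M ⊆ N and N is transitive. If X ∈ M and M ⊨ |X| = κ, then the restriction j↾X is an element of N. -/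
universe u

open FirstOrder FirstOrder.Language ZFSet

/-- The relations of the language of set theory: a single binary relation `mem`. -/
inductive memRelType : ℕ → Type
  | mem : memRelType 2

/-- The first-order language of set theory, with a single binary relation `∈`. -/
def memLang : FirstOrder.Language :=
  ⟨fun _ => Empty, memRelType⟩

/-- Any collection of ZFC sets is an `∈`-structure, via true membership. -/
instance zStruct (S : Set ZFSet.{u}) : memLang.Structure ↥S where
  funMap := fun f _ => f.elim
  RelMap := fun {n} r x =>
    match n, r, x with
    | _, memRelType.mem, x => (x 0 : ZFSet) ∈ (x 1 : ZFSet)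

/-- The `i`-th (bound) variable as a term. -/
abbrev mvar {n : ℕ} (i : Fin n) : memLang.Term (Empty ⊕ Fin n) :=
  FirstOrder.Language.Term.var (Sum.inr i)

/-- The atomic membership formula `t ∈ u`. -/
def memF {n : ℕ} (t u : memLang.Term (Empty ⊕ Fin n)) : memLang.BoundedFormula Empty n :=
  Relations.boundedFormula₂ memRelType.mem t u

/-- The axiom of extensionality. -/
def extAx : memLang.Sentence :=
  ∀' ∀' ((∀' ((memF (mvar 2) (mvar 0)) ⇔ (memF (mvar 2) (mvar 1)))) ⟹
    ((mvar 0) =' (mvar 1)))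

/-- The empty set axiom. -/
def emptyAx : memLang.Sentence :=
  ∃' ∀' (∼ (memF (mvar 1) (mvar 0)))

/-- The pairing axiom. -/
def pairAx : memLang.Sentence :=
  ∀' ∀' ∃' ((memF (mvar 0) (mvar 2)) ⊓ (memF (mvar 1) (mvar 2)))

/-- The union axiom. -/
def unionAx : memLang.Sentence :=
  ∀' ∃' ∀' ∀' (((memF (mvar 2) (mvar 3)) ⊓ (memF (mvar 3) (mvar 0))) ⟹
    (memF (mvar 2) (mvar 1)))

/-- The axiom of infinity. -/
def infAx : memLang.Sentence :=
  ∃' ((∃' ((memF (mvar 1) (mvar 0)) ⊓ ∀' (∼ (memF (mvar 2) (mvar 1))))) ⊓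
    (∀' ((memF (mvar 1) (mvar 0)) ⟹
      ∃' ((memF (mvar 2) (mvar 0)) ⊓
        ∀' ((memF (mvar 3) (mvar 2)) ⇔
          ((memF (mvar 3) (mvar 1)) ⊔ ((mvar 3) =' (mvar 1))))))))

/-- The foundation axiom. -/
def foundAx : memLang.Sentence :=
  ∀' ((∃' (memF (mvar 1) (mvar 0))) ⟹
    ∃' ((memF (mvar 1) (mvar 0)) ⊓
      ∀' (∼ ((memF (mvar 2) (mvar 0)) ⊓ (memF (mvar 2) (mvar 1))))))

/-- The axiom of choice, in the form: every family of nonempty pairwise disjoint sets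
admits a selector. -/
def choiceAx : memLang.Sentence :=
  ∀' (((∀' ((memF (mvar 1) (mvar 0)) ⟹ ∃' (memF (mvar 2) (mvar 1)))) ⊓
      (∀' ∀' (((memF (mvar 1) (mvar 0)) ⊓ (memF (mvar 2) (mvar 0)) ⊓
          (∼ ((mvar 1) =' (mvar 2)))) ⟹
        ∼ (∃' ((memF (mvar 3) (mvar 1)) ⊓ (memF (mvar 3) (mvar 2))))))) ⟹
    ∃' ∀' ((memF (mvar 2) (mvar 0)) ⟹
      ∃' ((memF (mvar 3) (mvar 2)) ⊓ (memF (mvar 3) (mvar 1)) ⊓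
        ∀' (((memF (mvar 4) (mvar 2)) ⊓ (memF (mvar 4) (mvar 1))) ⟹
          ((mvar 4) =' (mvar 3))))))

/-- The separation axiom for the formula `φ(p₀,…,p_{n-1}, x)`. -/
def sepAx (n : ℕ) (φ : memLang.BoundedFormula Empty (n + 1)) : memLang.Sentence :=
  (∀' (∃' (∀' ((memF (mvar ⟨n + 2, by omega⟩) (mvar ⟨n + 1, by omega⟩)) ⇔
    ((memF (mvar ⟨n + 2, by omega⟩) (mvar ⟨n, by omega⟩)) ⊓
      (φ.liftAt 2 n)))))).alls

/-- The collection axiom for the formula `φ(p₀,…,p_{n-1}, x, y)`. -/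
def collAx (n : ℕ) (φ : memLang.BoundedFormula Empty (n + 2)) : memLang.Sentence :=
  (∀' ((∀' ((memF (mvar ⟨n + 1, by omega⟩) (mvar ⟨n, by omega⟩)) ⟹
        ∃' (φ.liftAt 1 n))) ⟹
      (∃' (∀' ((memF (mvar ⟨n + 2, by omega⟩) (mvar ⟨n, by omega⟩)) ⟹
        ∃' ((memF (mvar ⟨n + 3, by omega⟩) (mvar ⟨n + 1, by omega⟩)) ⊓
          (φ.liftAt 2 n))))))).alls

/-- The power set axiom. -/
def powAx : memLang.Sentence :=
  ∀' ∃' ∀' ((∀' ((memF (mvar 3) (mvar 2)) ⟹ (memF (mvar 3) (mvar 0)))) ⟹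
    (memF (mvar 2) (mvar 1)))

/-- The theory `ZFC⁻`: ZFC without the power set axiom, with collection. -/
def ZFCminus : memLang.Theory :=
  {extAx, emptyAx, pairAx, unionAx, infAx, foundAx, choiceAx} ∪
    (⋃ n : ℕ, Set.range (sepAx n)) ∪ (⋃ n : ℕ, Set.range (collAx n))

/-- The theory `ZFC`. -/
def ZFCfull : memLang.Theory := insert powAx ZFCminus

/-- `S` is an elementary substructure of `T` with respect to the membership relation. -/
def ElemSub (S T : Set ZFSet.{u}) : Prop :=
  ∃ h : S ⊆ T, ∀ (n : ℕ) (φ : memLang.BoundedFormula Empty n) (x : Fin n → ↥S),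
    φ.Realize Empty.elim x ↔
      φ.Realize Empty.elim (fun i => (⟨(x i : ZFSet), h (x i).2⟩ : ↥T))

/-- `j : S → T` is an elementary embedding of `∈`-structures. -/
def ElemEmbOf (S T : Set ZFSet.{u}) (j : ↥S → ↥T) : Prop :=
  ∀ (n : ℕ) (φ : memLang.BoundedFormula Empty n) (x : Fin n → ↥S),
    φ.Realize Empty.elim x ↔ φ.Realize Empty.elim (j ∘ x)
/-- The cardinality of a ZFC set. -/
noncomputable def zcard (x : ZFSet.{u}) : Cardinal.{u + 1} := Cardinal.mk x.toSet

/-- `θ` is (the von Neumann representation of) a regular cardinal. -/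
def IsRegCard (θ : ZFSet.{u}) : Prop :=
  θ.IsOrdinal ∧ (zcard θ).IsRegular ∧ ∀ x ∈ θ, zcard x < zcard θ

/-- `κ` is (the von Neumann representation of) a cardinal. -/
def IsCardZ (κ : ZFSet.{u}) : Prop :=
  κ.IsOrdinal ∧ ∀ x ∈ κ, zcard x < zcard κ

/-- The collection `H(θ)` of sets hereditarily of cardinality less than `θ`. -/
def HZ (θ : ZFSet.{u}) : Set ZFSet.{u} :=
  {x | ZFSet.Hereditarily (fun y => zcard y < zcard θ) x}

/-- The collection `H(κ⁺)` of sets hereditarily of cardinality at most `κ`. -/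
def Hplus (κ : ZFSet.{u}) : Set ZFSet.{u} :=
  {x | ZFSet.Hereditarily (fun y => zcard y ≤ zcard κ) x}

/-- `f` codes a bijection from `a` onto `b`. -/
def IsBijZ (a b f : ZFSet.{u}) : Prop :=
  ZFSet.IsFunc a b f ∧ (∀ x₁ x₂ y, ZFSet.pair x₁ y ∈ f → ZFSet.pair x₂ y ∈ f → x₁ = x₂) ∧
    ∀ y ∈ b, ∃ x, ZFSet.pair x y ∈ f

/-- `f` codes an injection from `a` into `b`. -/
def IsInjZ (a b f : ZFSet.{u}) : Prop :=
  ZFSet.IsFunc a b f ∧ ∀ x₁ x₂ y, ZFSet.pair x₁ y ∈ f → ZFSet.pair x₂ y ∈ f → x₁ = x₂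

-- Part C : models
/-- A weak `κ`-model: a set `M` of size `κ` with `κ + 1 ⊆ M` satisfying `ZFC⁻`. -/
def WeakModelZ (κ : ZFSet.{u}) (M : Set ZFSet.{u}) : Prop :=
  Cardinal.mk ↥M = zcard κ ∧ insert κ κ.toSet ⊆ M ∧ (↥M ⊨ ZFCminus)

/-- `M` is closed under `<α`-sequences (of sets, with domains ordinals `< α`). -/
def LtClosed (α : ZFSet.{u}) (M : Set ZFSet.{u}) : Prop :=
  ∀ δ y f : ZFSet, δ ∈ α → y.toSet ⊆ M → ZFSet.IsFunc δ y f → f ∈ M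

/-- A `κ`-model: a weak `κ`-model closed under `<κ`-sequences. -/
def KappaModelZ (κ : ZFSet.{u}) (M : Set ZFSet.{u}) : Prop :=
  WeakModelZ κ M ∧ LtClosed κ M

/-- `j : S → T` has critical point `κ`. -/
def CritAt (S T : Set ZFSet.{u}) (j : ↥S → ↥T) (κ : ZFSet.{u}) : Prop :=
  ∃ hκ : κ ∈ S, (∀ x : ↥S, (x : ZFSet) ∈ κ → ((j x : ZFSet) = (x : ZFSet))) ∧
    (j ⟨κ, hκ⟩ : ZFSet) ≠ κ

/-- `j : S → T` is `κ`-powerset preserving: it has critical point `κ` and `S` and `T`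
have the same subsets of `κ`. -/
def PPres (κ : ZFSet.{u}) (S T : Set ZFSet.{u}) (j : ↥S → ↥T) : Prop :=
  CritAt S T j κ ∧ ∀ A : ZFSet, A ⊆ κ → (A ∈ S ↔ A ∈ T)

-- Part D : filters
/-- A filter on `κ` (in the sense of Holy–Schlicht): a collection of subsets of `κ` all of
whose finite intersections have cardinality `κ`. -/
def IsZFilter (κ : ZFSet.{u}) (F : Set ZFSet.{u}) : Prop :=
  (∀ A ∈ F, A ⊆ κ) ∧ ∀ (n : ℕ) (A : Fin n → ZFSet),
    (∀ i, A i ∈ F) → Cardinal.mk ↥(κ.toSet ∩ ⋂ i, (A i).toSet) = zcard κ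

/-- The diagonal intersection of a `κ`-sequence of subsets of `κ` coded by the
set-function `m`. -/
noncomputable def diagZ (κ m : ZFSet.{u}) : ZFSet.{u} :=
  ZFSet.sep (fun b => ∀ a v, a ∈ b → ZFSet.pair a v ∈ m → b ∈ v) κ

/-- `m` codes a `κ`-sequence of elements of `F`. -/
def CodesFilterSeq (κ : ZFSet.{u}) (F : Set ZFSet.{u}) (m : ZFSet.{u}) : Prop :=
  (∃ y, ZFSet.IsFunc κ y m) ∧ ∀ b v, b ∈ κ → ZFSet.pair b v ∈ m → v ∈ F

/-- `F` is an `M`-normal filter on `κ`: it measures `P(κ) ∩ M` and is closed under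
diagonal intersections of `κ`-sequences of its elements lying in `M`. -/
def MNormalZ (κ : ZFSet.{u}) (F : Set ZFSet.{u}) (M : Set ZFSet.{u}) : Prop :=
  IsZFilter κ F ∧ (∀ A : ZFSet, A ∈ M → A ⊆ κ → (A ∈ F ∨ (κ \ A) ∈ F)) ∧
    ∀ m ∈ M, CodesFilterSeq κ F m → diagZ κ m ∈ F

/-- `U` is weakly amenable for `M`: traces of `U` on `κ`-sized elements of `M` are in `M`. -/
def WeaklyAmenableZ (κ : ZFSet.{u}) (M : Set ZFSet.{u}) (U : Set ZFSet.{u}) : Prop :=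
  ∀ A : ZFSet, A ∈ M → zcard A ≤ zcard κ →
    ∃ B ∈ M, ∀ z : ZFSet, z ∈ B ↔ (z ∈ A ∧ z ∈ U)

/-- The domain of the ultrapower of `M` by a filter on `κ`: functions with domain `κ`
lying in `M`. -/
def UltFn (κ : ZFSet.{u}) (M : Set ZFSet.{u}) : Set ZFSet.{u} :=
  {f | f ∈ M ∧ ∃ y, ZFSet.IsFunc κ y f}

/-- The membership relation of the ultrapower of `M` by `U`. -/
noncomputable def UltMem (κ : ZFSet.{u}) (U : Set ZFSet.{u}) (f g : ZFSet.{u}) : Prop :=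
  ZFSet.sep (fun a => ∃ v w, ZFSet.pair a v ∈ f ∧ ZFSet.pair a w ∈ g ∧ v ∈ w) κ ∈ U

/-- The ultrapower of `M` by `U` is well-founded. -/
noncomputable def WellFoundedUlt (κ : ZFSet.{u}) (M : Set ZFSet.{u}) (U : Set ZFSet.{u}) : Prop :=
  WellFounded (fun f g : ↥(UltFn κ M) => UltMem κ U (f : ZFSet) (g : ZFSet))
-- Part E : the filter games G_γ^θ(κ)
/-- `m` codes the sequence `⟨g b | b ∈ d⟩` of `κ`-sized collections of sets. -/
def CodesSetSeq (m d : ZFSet.{u}) (g : ZFSet.{u} → Set ZFSet.{u}) : Prop :=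
  (∃ y, ZFSet.IsFunc d y m) ∧ ∀ b v, b ∈ d → ZFSet.pair b v ∈ m → v.toSet = g b

open Classical in
/-- The restriction of a play to the moves of index `< i`. -/
noncomputable def restrLt (g : ZFSet.{u} → Set ZFSet.{u}) (i : ZFSet.{u}) :
    ZFSet.{u} → Set ZFSet.{u} :=
  fun b => if b ∈ i then g b else ∅

open Classical in
/-- The restriction of a play to the moves of index `≤ i`. -/
noncomputable def restrLe (g : ZFSet.{u} → Set ZFSet.{u}) (i : ZFSet.{u}) :
    ZFSet.{u} → Set ZFSet.{u} :=
  fun b => if (b ∈ i ∨ b = i) then g b else ∅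

/-- The challenger's move at stage `i` of `G_γ^θ(κ)` is legal: he plays a `κ`-model
`M_i ≺ H(θ)` containing (codes for) the sequences of previous models and filter traces,
increasing the chain of models. -/
def ChalLegalAt (κ θ : ZFSet.{u}) (Ms Fs : ZFSet.{u} → Set ZFSet.{u}) (i : ZFSet.{u}) : Prop :=
  (∀ j, j ∈ i → Ms j ⊆ Ms i) ∧ KappaModelZ κ (Ms i) ∧ ElemSub (Ms i) (HZ θ) ∧
    (∃ m ∈ Ms i, CodesSetSeq m i Ms) ∧
    (∃ f ∈ Ms i, CodesSetSeq f i (fun b => Fs b ∩ Ms b))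

/-- The judge's move at stage `i` of `G_γ^θ(κ)` is legal: she plays a filter `F_i` on `κ`
measuring `P(κ) ∩ M_i` and extending her previous filters. -/
def JudgeLegalAt (κ : ZFSet.{u}) (Ms Fs : ZFSet.{u} → Set ZFSet.{u}) (i : ZFSet.{u}) : Prop :=
  IsZFilter κ (Fs i) ∧ (∀ A : ZFSet, A ∈ Ms i → A ⊆ κ → (A ∈ Fs i ∨ (κ \ A) ∈ Fs i)) ∧
    ∀ j, j ∈ i → Fs j ⊆ Fs i

/-- The winning condition for the judge in `G_γ^θ(κ)`: the union of the filters played is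
normal for the union of the models played. -/
def JudgeWinsRun (κ γ : ZFSet.{u}) (Ms Fs : ZFSet.{u} → Set ZFSet.{u}) : Prop :=
  MNormalZ κ (⋃ i ∈ γ.toSet, Fs i) (⋃ i ∈ γ.toSet, Ms i)

/-- `σ` is a winning strategy for the challenger in the game `G_γ^θ(κ)`. -/
noncomputable def ChalWS (κ θ γ : ZFSet.{u})
    (σ : ZFSet.{u} → (ZFSet.{u} → Set ZFSet.{u}) → Set ZFSet.{u}) : Prop :=
  ∀ Fs : ZFSet.{u} → Set ZFSet.{u},
    (∀ i ∈ γ.toSet, (∀ j, j ∈ i → JudgeLegalAt κ (fun b => σ b (restrLt Fs b)) Fs j) →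
      ChalLegalAt κ θ (fun b => σ b (restrLt Fs b)) Fs i) ∧
    ((∀ i ∈ γ.toSet, JudgeLegalAt κ (fun b => σ b (restrLt Fs b)) Fs i) →
      ¬ JudgeWinsRun κ γ (fun b => σ b (restrLt Fs b)) Fs)

/-- `τ` is a winning strategy for the judge in the game `G_γ^θ(κ)`. -/
noncomputable def JudgeWS (κ θ γ : ZFSet.{u})
    (τ : ZFSet.{u} → (ZFSet.{u} → Set ZFSet.{u}) → Set ZFSet.{u}) : Prop :=
  ∀ Ms : ZFSet.{u} → Set ZFSet.{u},
    (∀ i ∈ γ.toSet,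
      (∀ j, (j ∈ i ∨ j = i) → ChalLegalAt κ θ Ms (fun b => τ b (restrLe Ms b)) j) →
      JudgeLegalAt κ Ms (fun b => τ b (restrLe Ms b)) i) ∧
    ((∀ i ∈ γ.toSet, ChalLegalAt κ θ Ms (fun b => τ b (restrLe Ms b)) i) →
      JudgeWinsRun κ γ Ms (fun b => τ b (restrLe Ms b)))

/-- `κ` has the `γ`-filter property: for every regular `θ > κ`, the challenger has no
winning strategy in `G_γ^θ(κ)`. -/
noncomputable def FilterPropZ (κ γ : ZFSet.{u}) : Prop :=
  ∀ θ : ZFSet.{u}, IsRegCard θ → κ ∈ θ → ¬ ∃ σ, ChalWS κ θ γ σ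

/-- `κ` has the strategic `γ`-filter property: for every regular `θ > κ`, the judge has a
winning strategy in `G_γ^θ(κ)`. -/
noncomputable def StratFilterPropZ (κ γ : ZFSet.{u}) : Prop :=
  ∀ θ : ZFSet.{u}, IsRegCard θ → κ ∈ θ → ∃ τ, JudgeWS κ θ γ τ

/-- `κ` is `α`-Ramsey (Holy–Schlicht, Definition 5.1): for arbitrarily large regular
cardinals `θ`, every `A ⊆ κ` is contained, as an element, in some weak `κ`-model
`M ≺ H(θ)` closed under `<α`-sequences, for which there exists a `κ`-powerset preserving
elementary embedding `j : M → N`. -/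
def AlphaRamseyZ (α κ : ZFSet.{u}) : Prop :=
  ∀ η : ZFSet.{u}, ∃ θ : ZFSet.{u}, η ∈ θ ∧ IsRegCard θ ∧ ∀ A : ZFSet, A ⊆ κ →
    ∃ M : Set ZFSet.{u}, A ∈ M ∧ WeakModelZ κ M ∧ LtClosed α M ∧ ElemSub M (HZ θ) ∧
      ∃ (N : Set ZFSet.{u}) (j : ↥M → ↥N), ElemEmbOf M N j ∧ PPres κ M N j

/-- `S` is a transitive collection of sets. -/
def IsTransClass (S : Set ZFSet.{u}) : Prop :=
  ∀ x ∈ S, (x : ZFSet).toSet ⊆ S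

/-!
Fix in `M` a bijection `f : κ → X`. Since `j` fixes every `α < κ`, applying `j` to
`(α, f(α)) ∈ f` gives `(α, j(f(α))) ∈ j(f)`, so `j ↾ X = {(f(α), j(f)(α)) : α < κ}`.
By elementarity `N ⊨ ZFC⁻`, and this set is obtained in `N` by replacement (collection, then
separation) from the parameters `κ`, `f`, `j(f) ∈ N`. As `N` is transitive, the formulas
involved (being an ordered pair, membership of a pair, being single-valued) mean in `N` what
they mean in `V`.
-/

namespace IsTransClass

variable {T : Set ZFSet.{u}}

theorem mem_of_mem (hT : IsTransClass T) {x y : ZFSet.{u}} (hy : y ∈ T) (hx : x ∈ y) : x ∈ T :=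
  hT y hy hx

theorem fst_mem_of_pair_mem (hT : IsTransClass T) {x y : ZFSet.{u}} (h : ZFSet.pair x y ∈ T) :
    x ∈ T :=
  hT.mem_of_mem (hT.mem_of_mem h (by simp [ZFSet.pair] : {x} ∈ ZFSet.pair x y)) (by simp)

theorem snd_mem_of_pair_mem (hT : IsTransClass T) {x y : ZFSet.{u}} (h : ZFSet.pair x y ∈ T) :
    y ∈ T :=
  hT.mem_of_mem (hT.mem_of_mem h (by simp [ZFSet.pair] : {x, y} ∈ ZFSet.pair x y)) (by simp)

end IsTransClass

def IsSingleValued (f : ZFSet.{u}) : Prop :=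
  ∀ a v w, ZFSet.pair a v ∈ f → ZFSet.pair a w ∈ f → v = w

theorem ZFSet.IsFunc.isSingleValued {x y f : ZFSet.{u}} (hf : ZFSet.IsFunc x y f) :
    IsSingleValued f := by
  intro a v w hv hw
  obtain ⟨_, -, huniq⟩ := hf.2 a (ZFSet.pair_mem_prod.1 (hf.1 hv)).1
  rw [huniq v hv, huniq w hw]

def IsJointValue (f g a p : ZFSet.{u}) : Prop :=
  ∃ v w, ZFSet.pair a v ∈ f ∧ ZFSet.pair a w ∈ g ∧ p = ZFSet.pair v w

theorem IsJointValue.unique {f g a p q : ZFSet.{u}} (hf : IsSingleValued f)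
    (hg : IsSingleValued g) (hp : IsJointValue f g a p) (hq : IsJointValue f g a q) : p = q := by
  obtain ⟨v, w, hv, hw, rfl⟩ := hp
  obtain ⟨v', w', hv', hw', rfl⟩ := hq
  rw [hf a v v' hv hv', hg a w w' hw hw']

section Formulas

variable {n : ℕ}

def upairF (z x y : Fin n) : memLang.BoundedFormula Empty n :=
  memF (mvar x) (mvar z) ⊓ memF (mvar y) (mvar z) ⊓
    ∀' (memF (mvar (Fin.last n)) (mvar z.castSucc) ⟹
      ((mvar (Fin.last n) =' mvar x.castSucc) ⊔ (mvar (Fin.last n) =' mvar y.castSucc)))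

/-- The Kuratowski pair `p = {{x}, {x, y}}`, with `{x}` written as `{x, x}`. -/
def pairF (p x y : Fin n) : memLang.BoundedFormula Empty n :=
  ∃' ∃' (upairF p.castSucc.castSucc (Fin.last n).castSucc (Fin.last (n + 1)) ⊓
    upairF (Fin.last n).castSucc x.castSucc.castSucc x.castSucc.castSucc ⊓
    upairF (Fin.last (n + 1)) x.castSucc.castSucc y.castSucc.castSucc)

def pairMemF (x y f : Fin n) : memLang.BoundedFormula Empty n :=
  ∃' (memF (mvar (Fin.last n)) (mvar f.castSucc) ⊓ pairF (Fin.last n) x.castSucc y.castSucc)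

def jointValueF (f g a p : Fin n) : memLang.BoundedFormula Empty n :=
  ∃' ∃' (pairMemF a.castSucc.castSucc (Fin.last n).castSucc f.castSucc.castSucc ⊓
    pairMemF a.castSucc.castSucc (Fin.last (n + 1)) g.castSucc.castSucc ⊓
    pairF p.castSucc.castSucc (Fin.last n).castSucc (Fin.last (n + 1)))

def singleValuedF (f : Fin n) : memLang.BoundedFormula Empty n :=
  ∀' ∀' ∀' ((pairMemF (Fin.last n).castSucc.castSucc (Fin.last (n + 1)).castSucc
      f.castSucc.castSucc.castSucc ⊓
    pairMemF (Fin.last n).castSucc.castSucc (Fin.last (n + 2)) f.castSucc.castSucc.castSucc) ⟹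
      (mvar (Fin.last (n + 1)).castSucc =' mvar (Fin.last (n + 2))))

variable {T : Set ZFSet.{u}} (xs : Fin n → ↥T)

theorem realize_memF (v : Empty → ↥T) (x y : Fin n) :
    (memF (mvar x) (mvar y)).Realize v xs ↔ (xs x : ZFSet) ∈ (xs y : ZFSet) :=
  Iff.rfl

theorem realize_equal_mvar (v : Empty → ↥T) (x y : Fin n) :
    ((mvar x) =' (mvar y) : memLang.BoundedFormula Empty n).Realize v xs ↔
      (xs x : ZFSet) = (xs y : ZFSet) := by
  simp [Subtype.ext_iff]

variable {xs}

theorem realize_upairF (hT : IsTransClass T) (z x y : Fin n) :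
    (upairF z x y).Realize Empty.elim xs ↔ (xs z : ZFSet) = {(xs x : ZFSet), (xs y : ZFSet)} := by
  simp only [upairF, BoundedFormula.realize_inf, BoundedFormula.realize_all,
    BoundedFormula.realize_imp, BoundedFormula.realize_sup, realize_memF, realize_equal_mvar,
    Fin.snoc_castSucc, Fin.snoc_last]
  constructor
  · rintro ⟨⟨hx, hy⟩, h⟩
    ext c
    refine ⟨fun hc => ?_, fun hc => ?_⟩
    · simpa using h ⟨c, hT.mem_of_mem (xs z).2 hc⟩ hc
    · rcases ZFSet.mem_pair.1 hc with rfl | rfl <;> assumption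
  · intro h
    rw [h]
    exact ⟨⟨by simp, by simp⟩, fun c hc => ZFSet.mem_pair.1 hc⟩

theorem realize_pairF (hT : IsTransClass T) (p x y : Fin n) :
    (pairF p x y).Realize Empty.elim xs ↔ (xs p : ZFSet) = ZFSet.pair (xs x) (xs y) := by
  simp only [pairF, BoundedFormula.realize_ex, BoundedFormula.realize_inf, realize_upairF hT,
    Fin.snoc_castSucc, Fin.snoc_last, ZFSet.pair_eq_singleton]
  constructor
  · rintro ⟨a, b, ⟨hp, ha⟩, hb⟩
    rw [hp, ha, hb, ZFSet.pair]
  · intro hp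
    have hmem : ∀ c ∈ ZFSet.pair (xs x : ZFSet) (xs y), c ∈ T :=
      fun c hc => hT.mem_of_mem (xs p).2 (hp ▸ hc)
    exact ⟨⟨_, hmem {(xs x : ZFSet)} (by simp [ZFSet.pair])⟩,
      ⟨_, hmem {(xs x : ZFSet), (xs y : ZFSet)} (by simp [ZFSet.pair])⟩, ⟨hp, rfl⟩, rfl⟩

theorem realize_pairMemF (hT : IsTransClass T) (x y f : Fin n) :
    (pairMemF x y f).Realize Empty.elim xs ↔ ZFSet.pair (xs x : ZFSet) (xs y) ∈ (xs f : ZFSet) := by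
  simp only [pairMemF, BoundedFormula.realize_ex, BoundedFormula.realize_inf, realize_memF,
    realize_pairF hT, Fin.snoc_castSucc, Fin.snoc_last]
  constructor
  · rintro ⟨q, hq, hq'⟩
    rwa [← hq']
  · intro h
    exact ⟨⟨_, hT.mem_of_mem (xs f).2 h⟩, h, rfl⟩

theorem realize_jointValueF (hT : IsTransClass T) (f g a p : Fin n) :
    (jointValueF f g a p).Realize Empty.elim xs ↔
      IsJointValue (xs f) (xs g) (xs a) (xs p) := by
  simp only [jointValueF, BoundedFormula.realize_ex, BoundedFormula.realize_inf,
    realize_pairMemF hT, realize_pairF hT, Fin.snoc_castSucc, Fin.snoc_last]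
  constructor
  · rintro ⟨v, w, ⟨hv, hw⟩, hp⟩
    exact ⟨v, w, hv, hw, hp⟩
  · rintro ⟨v, w, hv, hw, hp⟩
    exact ⟨⟨v, hT.snd_mem_of_pair_mem (hT.mem_of_mem (xs f).2 hv)⟩,
      ⟨w, hT.snd_mem_of_pair_mem (hT.mem_of_mem (xs g).2 hw)⟩, ⟨hv, hw⟩, hp⟩

theorem realize_singleValuedF (hT : IsTransClass T) (f : Fin n) :
    (singleValuedF f).Realize Empty.elim xs ↔ IsSingleValued (xs f) := by
  simp only [singleValuedF, BoundedFormula.realize_all, BoundedFormula.realize_imp,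
    BoundedFormula.realize_inf, realize_pairMemF hT, realize_equal_mvar, Fin.snoc_castSucc,
    Fin.snoc_last]
  constructor
  · intro h a v w hv hw
    have hvT := hT.mem_of_mem (xs f).2 hv
    exact h ⟨a, hT.fst_mem_of_pair_mem hvT⟩ ⟨v, hT.snd_mem_of_pair_mem hvT⟩
      ⟨w, hT.snd_mem_of_pair_mem (hT.mem_of_mem (xs f).2 hw)⟩ ⟨hv, hw⟩
  · intro h a v w ⟨hv, hw⟩
    exact h a v w hv hw

end Formulas

namespace ZFCminus

variable {T : Set ZFSet.{u}}

theorem exists_sep (hM : ↥T ⊨ ZFCminus) {n : ℕ} (φ : memLang.BoundedFormula Empty (n + 1))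
    (ps : Fin n → ↥T) (A : ↥T) :
    ∃ B : ↥T, ∀ x : ↥T, (x : ZFSet) ∈ (B : ZFSet) ↔
      (x : ZFSet) ∈ (A : ZFSet) ∧ φ.Realize Empty.elim (Fin.snoc ps x) := by
  have h := hM.realize_of_mem (sepAx n φ) (Or.inl (Or.inr (Set.mem_iUnion.2 ⟨n, φ, rfl⟩)))
  have hvars : ∀ B x : ↥T, (Fin.snoc (Fin.snoc (Fin.snoc ps A) B) x : Fin (n + 1 + 2) → ↥T) ∘
      (fun i : Fin (n + 1) => if (i : ℕ) < n then Fin.castAdd 2 i else Fin.addNat i 2) =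
      Fin.snoc ps x := by
    intro B x
    funext i
    induction i using Fin.lastCases with
    | last => simp [Fin.snoc]
    | cast i => simp [Fin.snoc, Fin.castLT, i.isLt, Nat.lt_add_right]
  simp only [Sentence.Realize, sepAx, BoundedFormula.realize_alls, BoundedFormula.realize_all,
    BoundedFormula.realize_ex, BoundedFormula.realize_iff, BoundedFormula.realize_inf,
    realize_memF, BoundedFormula.realize_liftAt (Nat.le_succ n)] at h
  obtain ⟨B, hB⟩ := h ps A
  refine ⟨B, fun x => ?_⟩
  simpa [hvars, Fin.snoc, Subsingleton.elim (default : Empty → ↥T) Empty.elim] using hB x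

theorem exists_coll (hM : ↥T ⊨ ZFCminus) {n : ℕ} (φ : memLang.BoundedFormula Empty (n + 2))
    (ps : Fin n → ↥T) (A : ↥T)
    (h : ∀ x : ↥T, (x : ZFSet) ∈ (A : ZFSet) →
      ∃ y : ↥T, φ.Realize Empty.elim (Fin.snoc (Fin.snoc ps x) y)) :
    ∃ B : ↥T, ∀ x : ↥T, (x : ZFSet) ∈ (A : ZFSet) →
      ∃ y : ↥T, (y : ZFSet) ∈ (B : ZFSet) ∧ φ.Realize Empty.elim (Fin.snoc (Fin.snoc ps x) y) := by
  have hc := hM.realize_of_mem (collAx n φ) (Or.inr (Set.mem_iUnion.2 ⟨n, φ, rfl⟩))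
  have hvars₁ : ∀ x y : ↥T, (Fin.snoc (Fin.snoc (Fin.snoc ps A) x) y : Fin (n + 2 + 1) → ↥T) ∘
      (fun i : Fin (n + 2) => if (i : ℕ) < n then Fin.castAdd 1 i else Fin.addNat i 1) =
      Fin.snoc (Fin.snoc ps x) y := by
    intro x y
    funext i
    induction i using Fin.lastCases with
    | last => simp [Fin.snoc]
    | cast i =>
      induction i using Fin.lastCases with
      | last => simp [Fin.snoc]
      | cast i => simp [Fin.snoc, Fin.castLT, i.isLt, Nat.lt_add_right]
  have hvars₂ : ∀ B x y : ↥T,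
      (Fin.snoc (Fin.snoc (Fin.snoc (Fin.snoc ps A) B) x) y : Fin (n + 2 + 2) → ↥T) ∘
      (fun i : Fin (n + 2) => if (i : ℕ) < n then Fin.castAdd 2 i else Fin.addNat i 2) =
      Fin.snoc (Fin.snoc ps x) y := by
    intro B x y
    funext i
    induction i using Fin.lastCases with
    | last => simp [Fin.snoc]
    | cast i =>
      induction i using Fin.lastCases with
      | last => simp [Fin.snoc]
      | cast i => simp [Fin.snoc, Fin.castLT, i.isLt, Nat.lt_add_right]
  simp only [Sentence.Realize, collAx, BoundedFormula.realize_alls, BoundedFormula.realize_all,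
    BoundedFormula.realize_imp, BoundedFormula.realize_ex, BoundedFormula.realize_inf,
    realize_memF, BoundedFormula.realize_liftAt (Nat.le_add_right n 2),
    Subsingleton.elim (default : Empty → ↥T) Empty.elim] at hc
  obtain ⟨B, hB⟩ := hc ps A fun x hx => by
    obtain ⟨y, hy⟩ := h x (by simpa [Fin.snoc] using hx)
    exact ⟨y, by convert hy using 2; exact hvars₁ x y⟩
  refine ⟨B, fun x hx => ?_⟩
  obtain ⟨y, hyB, hy⟩ := hB x (by simpa [Fin.snoc] using hx)
  exact ⟨y, by simpa [Fin.snoc] using hyB, by convert hy using 2; exact (hvars₂ B x y).symm⟩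

theorem exists_pairing (hM : ↥T ⊨ ZFCminus) (x y : ↥T) :
    ∃ z : ↥T, (x : ZFSet) ∈ (z : ZFSet) ∧ (y : ZFSet) ∈ (z : ZFSet) := by
  have h := hM.realize_of_mem pairAx (Or.inl (Or.inl (by simp)))
  simp only [Sentence.Realize, Formula.Realize, pairAx, BoundedFormula.realize_all,
    BoundedFormula.realize_ex, BoundedFormula.realize_inf, realize_memF] at h
  exact h x y

theorem upair_mem (hT : IsTransClass T) (hM : ↥T ⊨ ZFCminus) {x y : ZFSet.{u}}
    (hx : x ∈ T) (hy : y ∈ T) : ({x, y} : ZFSet) ∈ T := by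
  obtain ⟨z, hxz, hyz⟩ := exists_pairing hM ⟨x, hx⟩ ⟨y, hy⟩
  obtain ⟨B, hB⟩ := exists_sep hM ((mvar (Fin.last 2) =' mvar 0) ⊔ (mvar (Fin.last 2) =' mvar 1))
    ![⟨x, hx⟩, ⟨y, hy⟩] z
  simp only [BoundedFormula.realize_sup, realize_equal_mvar] at hB
  convert B.2
  ext c
  constructor
  · intro hc
    rcases ZFSet.mem_pair.1 hc with rfl | rfl
    · exact (hB ⟨c, hx⟩).2 ⟨hxz, by simp [Fin.snoc]⟩
    · exact (hB ⟨c, hy⟩).2 ⟨hyz, by simp [Fin.snoc]⟩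
  · intro hc
    simpa [Fin.snoc] using ((hB ⟨c, hT.mem_of_mem B.2 hc⟩).1 hc).2

theorem pair_mem (hT : IsTransClass T) (hM : ↥T ⊨ ZFCminus) {x y : ZFSet.{u}}
    (hx : x ∈ T) (hy : y ∈ T) : ZFSet.pair x y ∈ T := by
  rw [ZFSet.pair, ← ZFSet.pair_eq_singleton]
  exact upair_mem hT hM (upair_mem hT hM hx hx) (upair_mem hT hM hx hy)

theorem _root_.IsJointValue.mem (hT : IsTransClass T) (hM : ↥T ⊨ ZFCminus) {f g a p : ZFSet.{u}}
    (hf : f ∈ T) (hg : g ∈ T) (h : IsJointValue f g a p) : p ∈ T := by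
  obtain ⟨v, w, hv, hw, rfl⟩ := h
  exact pair_mem hT hM (hT.snd_mem_of_pair_mem (hT.mem_of_mem hf hv))
    (hT.snd_mem_of_pair_mem (hT.mem_of_mem hg hw))

/-- Replacement for the class function `a ↦ (f(a), g(a))`, obtained from collection applied to
its totalization (any `y` will do where `f(a)` or `g(a)` is undefined) followed by separation. -/
theorem exists_jointValue_set (hT : IsTransClass T) (hM : ↥T ⊨ ZFCminus) {A f g : ZFSet.{u}}
    (hA : A ∈ T) (hf : f ∈ T) (hg : g ∈ T) (hfs : IsSingleValued f) (hgs : IsSingleValued g) :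
    ∃ r ∈ T, ∀ p, p ∈ r ↔ ∃ a ∈ A, IsJointValue f g a p := by
  obtain ⟨B, hB⟩ := exists_coll hM (jointValueF 0 1 2 3 ⊔ ∼(∃' jointValueF 0 1 2 4))
    ![⟨f, hf⟩, ⟨g, hg⟩] ⟨A, hA⟩ fun x _ => by
      simp only [BoundedFormula.realize_sup, BoundedFormula.realize_not,
        BoundedFormula.realize_ex, realize_jointValueF hT]
      rcases em (∃ y : ↥T, IsJointValue f g x y) with ⟨y, hy⟩ | hx
      · exact ⟨y, Or.inl hy⟩
      · exact ⟨x, Or.inr hx⟩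
  simp only [BoundedFormula.realize_sup, BoundedFormula.realize_not, BoundedFormula.realize_ex,
    realize_jointValueF hT] at hB
  obtain ⟨r, hr⟩ := exists_sep hM (∃' (memF (mvar 4) (mvar 0) ⊓ jointValueF 1 2 4 3))
    ![⟨A, hA⟩, ⟨f, hf⟩, ⟨g, hg⟩] B
  simp only [BoundedFormula.realize_ex, BoundedFormula.realize_inf, realize_memF,
    realize_jointValueF hT] at hr
  have hr' : ∀ p : ↥T, (p : ZFSet) ∈ (r : ZFSet) ↔
      (p : ZFSet) ∈ (B : ZFSet) ∧ ∃ a : ↥T, (a : ZFSet) ∈ A ∧ IsJointValue f g a p := hr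
  refine ⟨r, r.2, fun p => ⟨fun hp => ?_, fun ⟨a, ha, hp⟩ => ?_⟩⟩
  · obtain ⟨-, a, ha, hJ⟩ := (hr' ⟨p, hT.mem_of_mem r.2 hp⟩).1 hp
    exact ⟨a, ha, hJ⟩
  · have hpT : p ∈ T := IsJointValue.mem hT hM hf hg hp
    obtain ⟨y, hyB, hy | hy⟩ := hB ⟨a, hT.mem_of_mem hA ha⟩ ha
    · rw [← IsJointValue.unique hfs hgs hy hp]
      exact (hr' y).2 ⟨hyB, _, ha, hy⟩
    · exact absurd ⟨⟨p, hpT⟩, hp⟩ hy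

end ZFCminus

namespace ElemEmbOf

variable {S T : Set ZFSet.{u}} {j : ↥S → ↥T}

theorem models_ZFCminus (hj : ElemEmbOf S T j) (hS : ↥S ⊨ ZFCminus) : ↥T ⊨ ZFCminus := by
  refine ⟨fun φ hφ => ?_⟩
  have h := hS.realize_of_mem φ hφ
  rw [Sentence.Realize, Formula.Realize, Subsingleton.elim default Empty.elim, hj,
    Subsingleton.elim (j ∘ default) default] at h
  rwa [Sentence.Realize, Formula.Realize, Subsingleton.elim (default : Empty → ↥T) Empty.elim]

theorem mem_iff (hj : ElemEmbOf S T j) (x y : ↥S) :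
    (x : ZFSet) ∈ (y : ZFSet) ↔ (j x : ZFSet) ∈ (j y : ZFSet) :=
  hj 2 (memF (mvar 0) (mvar 1)) ![x, y]

theorem map_pair (hj : ElemEmbOf S T j) (hS : IsTransClass S) (hT : IsTransClass T)
    {q x y : ↥S} (h : (q : ZFSet) = ZFSet.pair x y) : (j q : ZFSet) = ZFSet.pair (j x) (j y) := by
  have := hj 3 (pairF 0 1 2) ![q, x, y]
  rw [realize_pairF hS, realize_pairF hT] at this
  exact this.1 h

theorem isSingleValued (hj : ElemEmbOf S T j) (hS : IsTransClass S) (hT : IsTransClass T)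
    {f : ↥S} (hf : IsSingleValued f) : IsSingleValued (j f) := by
  have := hj 1 (singleValuedF 0) ![f]
  rw [realize_singleValuedF hS, realize_singleValuedF hT] at this
  exact this.1 hf

theorem pair_mem_of_pair_mem (hj : ElemEmbOf S T j) (hS : IsTransClass S) (hT : IsTransClass T)
    {a x f : ↥S} (ha : (j a : ZFSet) = a) (h : ZFSet.pair (a : ZFSet) x ∈ (f : ZFSet)) :
    ZFSet.pair (a : ZFSet) (j x) ∈ (j f : ZFSet) := by
  let q : ↥S := ⟨_, hS.mem_of_mem f.2 h⟩
  rw [← ha, ← hj.map_pair hS hT (q := q) rfl]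
  exact (hj.mem_iff q f).1 h

end ElemEmbOf

theorem ancient_kunen_lemma_general (M N : Set ZFSet.{u})
    (hMtr : IsTransClass M) (hNtr : IsTransClass N)
    (hMzfc : ↥M ⊨ ZFCminus) (hMN : M ⊆ N)
    (j : ↥M → ↥N) (hj : ElemEmbOf M N j)
    (κ : ZFSet.{u}) (hκM : insert κ κ.toSet ⊆ M)
    (hcrit : CritAt M N j κ)
    (X : ZFSet.{u}) (hcard : ∃ f ∈ M, IsBijZ κ X f) :
    ∃ r ∈ N, ∀ p : ZFSet.{u},
      p ∈ r ↔ ∃ (x : ZFSet.{u}) (hx : x ∈ M), x ∈ X ∧ p = ZFSet.pair x (j ⟨x, hx⟩) := by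
  obtain ⟨f, hfM, hfun, -, hsurj⟩ := hcard
  obtain ⟨-, hfix, -⟩ := hcrit
  have hκ : κ ∈ M := hκM (Set.mem_insert κ _)
  have hf : IsSingleValued f := hfun.isSingleValued
  have hjf : IsSingleValued (j ⟨f, hfM⟩) := hj.isSingleValued hMtr hNtr hf
  have hjf_apply : ∀ a ∈ κ, ∀ x (hx : x ∈ M),
      ZFSet.pair a x ∈ f → ZFSet.pair a (j ⟨x, hx⟩) ∈ (j ⟨f, hfM⟩ : ZFSet) :=
    fun a ha x hx h => hj.pair_mem_of_pair_mem hMtr hNtr (a := ⟨a, hMtr.mem_of_mem hκ ha⟩)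
      (x := ⟨x, hx⟩) (f := ⟨f, hfM⟩) (hfix _ ha) h
  obtain ⟨r, hrN, hr⟩ := ZFCminus.exists_jointValue_set hNtr (hj.models_ZFCminus hMzfc)
    (hMN hκ) (hMN hfM) (j ⟨f, hfM⟩).2 hf hjf
  refine ⟨r, hrN, fun p => (hr p).trans ⟨?_, ?_⟩⟩
  · rintro ⟨a, ha, x, y, hx, hy, rfl⟩
    have hxM : x ∈ M := hMtr.snd_mem_of_pair_mem (hMtr.mem_of_mem hfM hx)
    refine ⟨x, hxM, (ZFSet.pair_mem_prod.1 (hfun.1 hx)).2, ?_⟩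
    rw [hjf a y _ hy (hjf_apply a ha x hxM hx)]
  · rintro ⟨x, hx, hxX, rfl⟩
    obtain ⟨a, ha⟩ := hsurj x hxX
    have haκ : a ∈ κ := (ZFSet.pair_mem_prod.1 (hfun.1 ha)).1
    exact ⟨a, haκ, x, _, ha, hjf_apply a haκ x hx ha, rfl⟩

/-- **The ancient Kunen lemma** (Lemma 6.1 in Holy–Schlicht). If `M` is a transitive model
of `ZFC⁻`, `j : M → N` is an elementary embedding with critical point `κ` where
`κ + 1 ⊆ M ⊆ N` and `N` is transitive, and `X ∈ M` has cardinality `κ` in `M`, then the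
restriction `j ↾ X` (as a set of ordered pairs) is an element of `N`. -/
theorem ancient_kunen_lemma (M N : Set ZFSet.{u})
    (hMtr : IsTransClass M) (hNtr : IsTransClass N)
    (hMzfc : ↥M ⊨ ZFCminus) (hMN : M ⊆ N)
    (j : ↥M → ↥N) (hj : ElemEmbOf M N j)
    (κ : ZFSet.{u}) (hord : κ.IsOrdinal) (hκM : insert κ κ.toSet ⊆ M)
    (hcrit : CritAt M N j κ)
    (X : ZFSet.{u}) (hX : X ∈ M) (hcard : ∃ f ∈ M, IsBijZ κ X f) :
    ∃ r ∈ N, ∀ p : ZFSet.{u},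
      p ∈ r ↔ ∃ (x : ZFSet.{u}) (hx : x ∈ M), x ∈ X ∧ p = ZFSet.pair x (j ⟨x, hx⟩) :=
  ancient_kunen_lemma_general M N hMtr hNtr hMzfc hMN j hj κ hκM hcrit X hcard
end

section
/- Assume there is a cardinal κ that is not measurable but becomes measurable after adding a Cohen subset of κ⁺ (i.e., after forcing with Add(κ⁺,1)). Then κ has the strategic κ⁺-filter property: the judge has a winning strategy in the filter game of length κ⁺ on κ. Consequently, the strategic κ⁺-filter property at κ does not imply that κ is measurable (its consistency follows from a κ⁺⁺-tall cardinal). -/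
universe u

open FirstOrder FirstOrder.Language ZFSet

/-- `κ` is a measurable cardinal: there is a `<κ`-complete nonprincipal ultrafilter on `κ`. -/
def MeasurableZ (κ : ZFSet.{u}) : Prop :=
  ∃ U : Set ZFSet.{u},
    (∀ A ∈ U, A ⊆ κ) ∧ (∅ : ZFSet.{u}) ∉ U ∧
    (∀ A : ZFSet.{u}, A ⊆ κ → (A ∈ U ∨ (κ \ A) ∈ U)) ∧
    (∀ s : ZFSet.{u}, s.toSet ⊆ U → zcard s < zcard κ →
      ∃ B ∈ U, ∀ z : ZFSet, z ∈ B ↔ (z ∈ κ ∧ ∀ A, A ∈ s → z ∈ A)) ∧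
    (∀ a, a ∈ κ → ∃ A ∈ U, a ∉ A)

/-- `S` is a stationary subset of the ordinal `κ`. -/
def IsStatZ' (κ : ZFSet.{u}) (S : Set ZFSet.{u}) : Prop :=
  S ⊆ κ.toSet ∧ ∀ C : Set ZFSet.{u},
    (C ⊆ κ.toSet ∧ (∀ a ∈ κ.toSet, ∃ c ∈ C, a ∈ c) ∧
      ∀ a ∈ κ.toSet, (∃ b, b ∈ a) → (∀ b, b ∈ a → ∃ c ∈ C, b ∈ c ∧ c ∈ a) → a ∈ C) →
    (S ∩ C).Nonempty

/-- The conditions of the forcing `Add(κ⁺, 1)`: partial functions from `κ⁺` to `2` of size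
at most `κ`. -/
def CohenCond (κ κp : ZFSet.{u}) : Set ZFSet.{u} :=
  {p | (∃ d y : ZFSet.{u}, d ⊆ κp ∧ y ⊆ (insert ∅ {∅} : ZFSet.{u}) ∧ ZFSet.IsFunc d y p) ∧
    zcard p ≤ zcard κ}

/-!
Read `Force p A` as `p ⊩ Ǎ ∈ U̇`, for a name `U̇` of a normal measure on `κ` in the extension
by `Add(κ⁺, 1)`. Along a play the judge builds a `⊆`-increasing sequence of conditions `p_i`,
`i < κ⁺`, where `p_i` extends all earlier conditions and decides `Ǎ ∈ U̇` for every `A ⊆ κ`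
in `M_i`; she plays `F_i = {A | p_i ⊩ Ǎ ∈ U̇}`. Both requirements are met by chains of
conditions of length `≤ κ`, which have upper bounds because `Add(κ⁺, 1)` is `<κ⁺`-closed.
Each `F_i` is a filter since forced sets are stationary, hence of size `κ`. For normality of
`⋃ F_i`: any `κ` members of it already lie in a single `F_i` by regularity of `κ⁺`, so `p_i`
forces them, and hence their diagonal intersection, into `U̇`.
-/

open Cardinal

theorem Cardinal.sum_le_of_forall_le {ι : Type u} {f : ι → Cardinal.{u}} {c : Cardinal.{u}}
    (hc : ℵ₀ ≤ c) (hι : #ι ≤ c) (hf : ∀ i, f i ≤ c) : sum f ≤ c :=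
  calc sum f ≤ sum fun _ : ι => c := sum_le_sum _ _ hf
    _ = #ι * c := sum_const' _ _
    _ ≤ c * c := by gcongr
    _ = c := mul_eq_self hc

theorem zcard_insert_self_lt {x : ZFSet.{u}} {c : Cardinal.{u + 1}} (hc : ℵ₀ ≤ c)
    (hx : zcard x < c) : zcard (insert x x) < c := by
  have hle : zcard (insert x x) ≤ zcard x + 1 := by
    change #((insert x x : ZFSet) : Set ZFSet) ≤ #(x : Set ZFSet) + 1
    rw [ZFSet.coe_insert]
    exact mk_insert_le
  exact hle.trans_lt (add_lt_of_lt hc hx (one_lt_aleph0.trans_le hc))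

theorem IsCardZ.insert_self_mem {κ x : ZFSet.{u}} (hκ : IsCardZ κ) (hinf : ℵ₀ ≤ zcard κ)
    (hx : x ∈ κ) : insert x x ∈ κ := by
  rcases (isOrdinal_succ (hκ.1.mem hx)).mem_trichotomous hκ.1 with h | h | h
  · exact h
  · exact absurd (h ▸ zcard_insert_self_lt hinf (hκ.2 x hx)) (lt_irrefl _)
  · rcases mem_insert_iff.1 h with rfl | h
    · exact absurd hx (mem_irrefl _)
    · exact absurd hx (mem_asymm h)

theorem zcard_le_of_mem_succ {κ κp x : ZFSet.{u}} (hκp : IsCardZ κp)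
    (hsucc : zcard κp = Order.succ (zcard κ)) (hx : x ∈ κp) : zcard x ≤ zcard κ :=
  Order.lt_succ_iff.1 (hsucc ▸ hκp.2 x hx)

theorem ZFSet.IsOrdinal.exists_bound_of_sum_lt {θ : ZFSet.{u}} (hθ : θ.IsOrdinal)
    {α : Type (u + 1)} (ι : α → ZFSet.{u}) (hι : ∀ a, ι a ∈ θ)
    (hsum : sum (fun a => zcard (ι a)) < zcard θ) : ∃ i ∈ θ, ∀ a, ι a ⊆ i := by
  by_contra! h
  have hcover : θ.toSet ⊆ ⋃ a, (ι a).toSet := fun i hi => by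
    obtain ⟨a, ha⟩ := h i hi
    exact Set.mem_iUnion.2 ⟨a, ((hθ.mem (hι a)).not_subset_iff_mem (hθ.mem hi)).1 ha⟩
  exact ((mk_le_mk_of_subset hcover).trans mk_iUnion_le_sum_mk).not_gt hsum

theorem exists_bound_of_mk_le_of_eq_succ {κ κp : ZFSet.{u}} (hκp : IsCardZ κp)
    (hsucc : zcard κp = Order.succ (zcard κ)) (hinf : ℵ₀ ≤ zcard κ) {α : Type (u + 1)}
    (ι : α → ZFSet.{u}) (hα : #α ≤ zcard κ) (hι : ∀ a, ι a ∈ κp) :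
    ∃ i ∈ κp, ∀ a, ι a ⊆ i := by
  refine hκp.1.exists_bound_of_sum_lt ι hι ?_
  rw [hsucc]
  exact Order.lt_succ_of_le
    (sum_le_of_forall_le hinf hα fun a => zcard_le_of_mem_succ hκp hsucc (hι a))

theorem IsStatZ'.exists_mem_of_mem {κ : ZFSet.{u}} {S : Set ZFSet.{u}} (hκ : IsCardZ κ)
    (hinf : ℵ₀ ≤ zcard κ) (hS : IsStatZ' κ S) {a : ZFSet.{u}} (ha : a ∈ κ) :
    ∃ s ∈ S, a ∈ s := by
  have hunbounded : ∀ x ∈ κ.toSet, ∃ c ∈ {c | c ∈ κ ∧ a ∈ c}, x ∈ c := fun x hx => by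
    rcases (hκ.1.mem ha).mem_trichotomous (hκ.1.mem hx) with h | rfl | h
    · exact ⟨insert x x, ⟨hκ.insert_self_mem hinf hx, mem_insert_of_mem _ h⟩, mem_insert x x⟩
    · exact ⟨insert a a, ⟨hκ.insert_self_mem hinf hx, mem_insert a a⟩, mem_insert a a⟩
    · exact ⟨insert a a, ⟨hκ.insert_self_mem hinf ha, mem_insert a a⟩,
        mem_insert_of_mem _ h⟩
  obtain ⟨s, hsS, -, has⟩ := hS.2 {c | c ∈ κ ∧ a ∈ c} ⟨fun c hc => hc.1, hunbounded,
    fun x hx ⟨b, hb⟩ hlim => by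
      obtain ⟨c, ⟨-, hac⟩, -, hcx⟩ := hlim b hb
      exact ⟨hx, (hκ.1.mem hx).mem_trans hac hcx⟩⟩
  exact ⟨s, hsS, has⟩

theorem IsStatZ'.mk_eq {κ : ZFSet.{u}} {S : Set ZFSet.{u}} (hκ : IsCardZ κ)
    (hinf : ℵ₀ ≤ zcard κ) (hreg : (zcard κ).IsRegular) (hS : IsStatZ' κ S) :
    #S = zcard κ := by
  refine (mk_le_mk_of_subset hS.1).antisymm (not_lt.1 fun hlt => ?_)
  obtain ⟨i, hi, hbound⟩ := hκ.1.exists_bound_of_sum_lt (fun s : S => (s : ZFSet))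
    (fun s => hS.1 s.2)
    (sum_lt_of_isRegular hreg hlt fun s => hκ.2 _ (hS.1 s.2))
  obtain ⟨s, hsS, his⟩ := hS.exists_mem_of_mem hκ hinf hi
  exact mem_irrefl i (hbound ⟨s, hsS⟩ his)

theorem mem_cohenCond_iff {κ κp p : ZFSet.{u}} : p ∈ CohenCond κ κp ↔
    (∀ z ∈ p, ∃ c ∈ κp, ∃ w ∈ (insert ∅ {∅} : ZFSet.{u}), z = pair c w) ∧
      (∀ c w w', pair c w ∈ p → pair c w' ∈ p → w = w') ∧ zcard p ≤ zcard κ := by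
  constructor
  · rintro ⟨⟨d, y, hd, hy, hf⟩, hcard⟩
    refine ⟨fun z hz => ?_, fun c w w' hw hw' => ?_, hcard⟩
    · obtain ⟨c, hc, w, hw, rfl⟩ := mem_prod.1 (hf.1 hz)
      exact ⟨c, hd hc, w, hy hw, rfl⟩
    · obtain ⟨v, -, huniq⟩ := hf.2 c (pair_mem_prod.1 (hf.1 hw)).1
      rw [huniq w hw, huniq w' hw']
  · rintro ⟨hpairs, huniq, hcard⟩
    refine ⟨⟨ZFSet.sep (fun c => ∃ w, pair c w ∈ p) κp, insert ∅ {∅},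
      fun c hc => (mem_sep.1 hc).1, subset_rfl, fun z hz => ?_, fun c hc => ?_⟩, hcard⟩
    · obtain ⟨c, hc, w, hw, rfl⟩ := hpairs z hz
      exact pair_mem_prod.2 ⟨mem_sep.2 ⟨hc, w, hz⟩, hw⟩
    · obtain ⟨-, w, hw⟩ := mem_sep.1 hc
      exact ⟨w, hw, fun w' hw' => huniq c w' w hw' hw⟩

theorem empty_mem_cohenCond {κ κp : ZFSet.{u}} : (∅ : ZFSet.{u}) ∈ CohenCond κ κp :=
  mem_cohenCond_iff.2 ⟨fun z hz => absurd hz (notMem_empty z),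
    fun _ _ _ h => absurd h (notMem_empty _), by
      change #((∅ : ZFSet) : Set ZFSet) ≤ _
      simp⟩

theorem iUnion_mem_cohenCond {κ κp : ZFSet.{u}} (hinf : ℵ₀ ≤ zcard κ) {α : Type (u + 1)}
    [Small.{u} α] {R : α → ZFSet.{u}} (hα : #α ≤ zcard κ) (hR : ∀ a, R a ∈ CohenCond κ κp)
    (hchain : ∀ a b, R a ⊆ R b ∨ R b ⊆ R a) : ZFSet.iUnion R ∈ CohenCond κ κp := by
  have hR' := fun a => mem_cohenCond_iff.1 (hR a)
  refine mem_cohenCond_iff.2 ⟨fun z hz => ?_, fun c w w' hw hw' => ?_, ?_⟩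
  · obtain ⟨a, hz⟩ := mem_iUnion.1 hz
    exact (hR' a).1 z hz
  · obtain ⟨a, ha⟩ := mem_iUnion.1 hw
    obtain ⟨b, hb⟩ := mem_iUnion.1 hw'
    rcases hchain a b with h | h
    · exact (hR' b).2.1 c w w' (h ha) hb
    · exact (hR' a).2.1 c w w' ha (h hb)
  · change #((ZFSet.iUnion R : ZFSet) : Set ZFSet) ≤ _
    rw [coe_iUnion]
    exact mk_iUnion_le_sum_mk.trans (sum_le_of_forall_le hinf hα fun a => (hR' a).2.2)

theorem exists_cohenCond_ub {κ κp b r : ZFSet.{u}} (hinf : ℵ₀ ≤ zcard κ) (hb : b.IsOrdinal)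
    (hcard : zcard b ≤ zcard κ) (hr : r ∈ CohenCond κ κp) {R : ZFSet.{u} → ZFSet.{u}}
    (hR : ∀ x ∈ b, R x ∈ CohenCond κ κp ∧ r ⊆ R x) (hmono : ∀ x ∈ b, ∀ y ∈ x, R y ⊆ R x) :
    ∃ q ∈ CohenCond κ κp, r ⊆ q ∧ ∀ x ∈ b, R x ⊆ q := by
  rcases b.eq_empty_or_nonempty with rfl | ⟨x₀, hx₀⟩
  · exact ⟨r, hr, subset_rfl, fun x hx => absurd hx (notMem_empty x)⟩
  have hchain (x y : b) : R x ⊆ R y ∨ R y ⊆ R x := by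
    rcases (hb.mem x.2).mem_trichotomous (hb.mem y.2) with h | h | h
    · exact Or.inl (hmono y y.2 x h)
    · exact Or.inl (h ▸ subset_rfl)
    · exact Or.inr (hmono x x.2 y h)
  refine ⟨ZFSet.iUnion fun x : b => R x,
    iUnion_mem_cohenCond hinf hcard (fun x => (hR x x.2).1) hchain,
    (hR x₀ hx₀).2.trans (subset_iUnion (fun x : b => R x) ⟨x₀, hx₀⟩),
    fun x hx => subset_iUnion (fun x : b => R x) ⟨x, hx⟩⟩

theorem exists_cohenCond_forall_of_isOrdinal {κ κp δ r : ZFSet.{u}} (hinf : ℵ₀ ≤ zcard κ)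
    (hδ : δ.IsOrdinal) (hcard : zcard δ ≤ zcard κ) (hr : r ∈ CohenCond κ κp)
    (P : ZFSet.{u} → ZFSet.{u} → Prop)
    (hdense : ∀ a ∈ δ, ∀ p ∈ CohenCond κ κp, ∃ q ∈ CohenCond κ κp, p ⊆ q ∧ P a q)
    (hmono : ∀ a ∈ δ, ∀ p ∈ CohenCond κ κp, ∀ q ∈ CohenCond κ κp, p ⊆ q → P a p → P a q) :
    ∃ q ∈ CohenCond κ κp, r ⊆ q ∧ ∀ a ∈ δ, P a q := by
  let Q : ZFSet.{u} → ZFSet.{u} := mem_wf.fix fun a rec => Classical.epsilon fun q =>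
    q ∈ CohenCond κ κp ∧ r ⊆ q ∧ (∀ a' (h : a' ∈ a), rec a' h ⊆ q) ∧ P a q
  let S (a q : ZFSet.{u}) : Prop :=
    q ∈ CohenCond κ κp ∧ r ⊆ q ∧ (∀ a' ∈ a, Q a' ⊆ q) ∧ P a q
  have hQ : ∀ a ∈ δ, S a (Q a) := by
    intro a
    induction a using ZFSet.inductionOn with
    | _ a ih =>
      intro ha
      have hsub : a ⊆ δ := hδ.subset_of_mem ha
      obtain ⟨p, hp, hrp, hQp⟩ := exists_cohenCond_ub hinf (hδ.mem ha)
        ((mk_le_mk_of_subset (coe_subset_coe.2 hsub)).trans hcard) hr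
        (fun x hx => ⟨(ih x hx (hsub hx)).1, (ih x hx (hsub hx)).2.1⟩)
        (fun x hx => (ih x hx (hsub hx)).2.2.1)
      obtain ⟨q, hq, hpq, hPq⟩ := hdense a ha p hp
      rw [show Q a = Classical.epsilon (S a) from mem_wf.fix_eq _ a]
      exact Classical.epsilon_spec (p := S a)
        ⟨q, hq, hrp.trans hpq, fun a' h => (hQp a' h).trans hpq, hPq⟩
  obtain ⟨q, hq, hrq, hQq⟩ := exists_cohenCond_ub hinf hδ hcard hr
    (fun a ha => ⟨(hQ a ha).1, (hQ a ha).2.1⟩) (fun a ha => (hQ a ha).2.2.1)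
  exact ⟨q, hq, hrq, fun a ha => hmono a ha _ (hQ a ha).1 q hq (hQq a ha) (hQ a ha).2.2.2⟩

theorem exists_cohenCond_decides {κ κp r : ZFSet.{u}} (Force : ZFSet.{u} → ZFSet.{u} → Prop)
    (hκ : IsCardZ κ) (hinf : ℵ₀ ≤ zcard κ)
    (hmono : ∀ p q A, p ∈ CohenCond κ κp → q ∈ CohenCond κ κp → p ⊆ q →
      Force p A → Force q A)
    (hdec : ∀ p ∈ CohenCond κ κp, ∀ A : ZFSet.{u}, A ⊆ κ →
      ∃ q ∈ CohenCond κ κp, p ⊆ q ∧ (Force q A ∨ Force q (κ \ A)))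
    (hr : r ∈ CohenCond κ κp) {D : Set ZFSet.{u}} (hD : ∀ A ∈ D, A ⊆ κ)
    (hcard : #D ≤ zcard κ) :
    ∃ q ∈ CohenCond κ κp, r ⊆ q ∧ ∀ A ∈ D, Force q A ∨ Force q (κ \ A) := by
  obtain ⟨e⟩ := hcard
  let P (a q : ZFSet.{u}) : Prop := ∀ A : D, (e A : ZFSet) = a → Force q A ∨ Force q (κ \ A)
  have hdense : ∀ a ∈ κ, ∀ p ∈ CohenCond κ κp, ∃ q ∈ CohenCond κ κp, p ⊆ q ∧ P a q := by
    intro a _ p hp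
    by_cases h : ∃ A : D, (e A : ZFSet) = a
    · obtain ⟨A, rfl⟩ := h
      obtain ⟨q, hq, hpq, hAq⟩ := hdec p hp A (hD A A.2)
      exact ⟨q, hq, hpq, fun A' hA' => e.injective (Subtype.ext hA') ▸ hAq⟩
    · exact ⟨p, hp, subset_rfl, fun A hA => absurd ⟨A, hA⟩ h⟩
  obtain ⟨q, hq, hrq, hPq⟩ := exists_cohenCond_forall_of_isOrdinal hinf hκ.1 le_rfl hr P hdense
    fun a _ p hp q hq hpq hPp A hA => (hPp A hA).imp (hmono p q _ hp hq hpq) (hmono p q _ hp hq hpq)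
  exact ⟨q, hq, hrq, fun A hA => hPq _ (e ⟨A, hA⟩).2 ⟨A, hA⟩ rfl⟩

theorem restrLe_self (g : ZFSet.{u} → Set ZFSet.{u}) (i : ZFSet.{u}) : restrLe g i i = g i :=
  if_pos (Or.inr rfl)

theorem restrLe_restrLe {g : ZFSet.{u} → Set ZFSet.{u}} {i j : ZFSet.{u}} (hi : i.IsOrdinal)
    (hj : j ∈ i) : restrLe (restrLe g i) j = restrLe g j := by
  funext b
  by_cases h : b ∈ j ∨ b = j
  · have hb : b ∈ i ∨ b = i := Or.inl (h.elim (hi.mem_trans · hj) (· ▸ hj))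
    simp only [restrLe, if_pos h, if_pos hb]
  · simp only [restrLe, if_neg h]

/-- The judge's condition `p_b` after the moves `g`. The earlier conditions are computed from
the restricted plays `restrLe g j`, so that `p_j` only depends on the moves up to stage `j`. -/
noncomputable def judgeCond (Force : ZFSet.{u} → ZFSet.{u} → Prop) (κ κp : ZFSet.{u}) :
    ZFSet.{u} → (ZFSet.{u} → Set ZFSet.{u}) → ZFSet.{u} :=
  mem_wf.fix (C := fun _ => (ZFSet.{u} → Set ZFSet.{u}) → ZFSet.{u}) fun b rec g =>
    Classical.epsilon fun q => q ∈ CohenCond κ κp ∧ (∀ j (h : j ∈ b), rec j h (restrLe g j) ⊆ q) ∧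
      ∀ A ∈ g b, A ⊆ κ → Force q A ∨ Force q (κ \ A)

theorem judgeCond_eq (Force : ZFSet.{u} → ZFSet.{u} → Prop) (κ κp b : ZFSet.{u})
    (g : ZFSet.{u} → Set ZFSet.{u}) :
    judgeCond Force κ κp b g = Classical.epsilon fun q => q ∈ CohenCond κ κp ∧
      (∀ j ∈ b, judgeCond Force κ κp j (restrLe g j) ⊆ q) ∧
      ∀ A ∈ g b, A ⊆ κ → Force q A ∨ Force q (κ \ A) :=
  congrFun (mem_wf.fix_eq (C := fun _ => (ZFSet.{u} → Set ZFSet.{u}) → ZFSet.{u}) _ _) g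

theorem judgeCond_spec {κ κp : ZFSet.{u}} (Force : ZFSet.{u} → ZFSet.{u} → Prop)
    (hκ : IsCardZ κ) (hinf : ℵ₀ ≤ zcard κ) (hκp : IsCardZ κp)
    (hsucc : zcard κp = Order.succ (zcard κ))
    (hmono : ∀ p q A, p ∈ CohenCond κ κp → q ∈ CohenCond κ κp → p ⊆ q →
      Force p A → Force q A)
    (hdec : ∀ p ∈ CohenCond κ κp, ∀ A : ZFSet.{u}, A ⊆ κ →
      ∃ q ∈ CohenCond κ κp, p ⊆ q ∧ (Force q A ∨ Force q (κ \ A)))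
    {Ms : ZFSet.{u} → Set ZFSet.{u}} {i : ZFSet.{u}} (hi : i ∈ κp)
    (hMs : ∀ j, (j ∈ i ∨ j = i) → #(Ms j) ≤ zcard κ) :
    judgeCond Force κ κp i (restrLe Ms i) ∈ CohenCond κ κp ∧
      (∀ j ∈ i, judgeCond Force κ κp j (restrLe Ms j) ⊆ judgeCond Force κ κp i (restrLe Ms i)) ∧
      ∀ A ∈ Ms i, A ⊆ κ → Force (judgeCond Force κ κp i (restrLe Ms i)) A ∨
        Force (judgeCond Force κ κp i (restrLe Ms i)) (κ \ A) := by
  induction i using ZFSet.inductionOn generalizing Ms with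
  | _ i ih =>
    have hio : i.IsOrdinal := hκp.1.mem hi
    have hprev : ∀ j ∈ i, _ := fun j hj => ih j hj (hκp.1.mem_trans hj hi)
      fun k hk => hMs k (Or.inl (hk.elim (hio.mem_trans · hj) (· ▸ hj)))
    obtain ⟨p, hp, -, hjp⟩ := exists_cohenCond_ub hinf hio (zcard_le_of_mem_succ hκp hsucc hi)
      empty_mem_cohenCond (fun j hj => ⟨(hprev j hj).1, empty_subset _⟩)
      (fun j hj => (hprev j hj).2.1)
    obtain ⟨q, hq, hpq, hdecq⟩ := exists_cohenCond_decides Force hκ hinf hmono hdec hp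
      (D := {A | A ∈ Ms i ∧ A ⊆ κ}) (fun A hA => hA.2)
      ((mk_le_mk_of_subset fun A hA => hA.1).trans (hMs i (Or.inr rfl)))
    have hex : ∃ q, q ∈ CohenCond κ κp ∧
        (∀ j ∈ i, judgeCond Force κ κp j (restrLe (restrLe Ms i) j) ⊆ q) ∧
        ∀ A ∈ restrLe Ms i i, A ⊆ κ → Force q A ∨ Force q (κ \ A) := by
      refine ⟨q, hq, fun j hj => ?_, fun A hA hAκ => hdecq A ⟨by rwa [restrLe_self] at hA, hAκ⟩⟩
      rw [restrLe_restrLe hio hj]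
      exact (hjp j hj).trans hpq
    obtain ⟨hmem, hsub, hdecides⟩ := judgeCond_eq Force κ κp i _ ▸ Classical.epsilon_spec hex
    refine ⟨hmem, fun j hj => ?_, fun A hA => hdecides A (by rwa [restrLe_self])⟩
    simpa only [restrLe_restrLe hio hj] using hsub j hj

theorem exists_forces_subset_forall {κ κp p : ZFSet.{u}}
    {Force : ZFSet.{u} → ZFSet.{u} → Prop}
    (hinter : ∀ p ∈ CohenCond κ κp, ∀ A B : ZFSet.{u}, Force p A → Force p B →
      Force p (A ∩ B)) (hp : p ∈ CohenCond κ κp) :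
    ∀ {n : ℕ} (A : Fin (n + 1) → ZFSet.{u}), (∀ k, Force p (A k)) →
      ∃ B, Force p B ∧ ∀ k, B ⊆ A k
  | 0, A, hA => ⟨A 0, hA 0, fun k => Fin.fin_one_eq_zero k ▸ subset_rfl⟩
  | n + 1, A, hA => by
    obtain ⟨B, hB, hBA⟩ := exists_forces_subset_forall hinter hp (fun k => A k.succ)
      fun k => hA k.succ
    refine ⟨A 0 ∩ B, hinter p hp _ _ (hA 0) hB, Fin.cases ?_ fun k => ?_⟩
    · exact fun z hz => (mem_inter.1 hz).1
    · exact fun z hz => hBA k (mem_inter.1 hz).2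

theorem isZFilter_of_forces {κ κp : ZFSet.{u}} {Force : ZFSet.{u} → ZFSet.{u} → Prop}
    (hκ : IsCardZ κ) (hinf : ℵ₀ ≤ zcard κ) (hreg : (zcard κ).IsRegular)
    (hstat : ∀ p ∈ CohenCond κ κp, ∀ A : ZFSet.{u}, Force p A → A ⊆ κ ∧ IsStatZ' κ A.toSet)
    (hinter : ∀ p ∈ CohenCond κ κp, ∀ A B : ZFSet.{u}, Force p A → Force p B →
      Force p (A ∩ B))
    {F : Set ZFSet.{u}} (hF : ∀ n (A : Fin n → ZFSet.{u}), (∀ k, A k ∈ F) →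
      ∃ p ∈ CohenCond κ κp, ∀ k, Force p (A k)) :
    IsZFilter κ F := by
  refine ⟨fun A hA => ?_, fun n A hA => ?_⟩
  · obtain ⟨p, hp, hpA⟩ := hF 1 (fun _ => A) fun _ => hA
    exact (hstat p hp A (hpA 0)).1
  cases n with
  | zero => simp [zcard]
  | succ n =>
    obtain ⟨p, hp, hpA⟩ := hF _ A hA
    obtain ⟨B, hB, hBA⟩ := exists_forces_subset_forall hinter hp A hpA
    obtain ⟨hBκ, hBstat⟩ := hstat p hp B hB
    exact (mk_le_mk_of_subset Set.inter_subset_left).antisymm <|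
      (hBstat.mk_eq hκ hinf hreg).ge.trans <| mk_le_mk_of_subset <|
        Set.subset_inter (fun z hz => hBκ hz) (Set.subset_iInter fun k z hz => hBA k hz)

noncomputable def judgeStrategy (Force : ZFSet.{u} → ZFSet.{u} → Prop) (κ κp : ZFSet.{u}) :
    ZFSet.{u} → (ZFSet.{u} → Set ZFSet.{u}) → Set ZFSet.{u} :=
  fun b g => {A | Force (judgeCond Force κ κp b g) A}

theorem judgeLegalAt_judgeStrategy {κ κp : ZFSet.{u}} (Force : ZFSet.{u} → ZFSet.{u} → Prop)
    (hκ : IsCardZ κ) (hinf : ℵ₀ ≤ zcard κ) (hreg : (zcard κ).IsRegular) (hκp : IsCardZ κp)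
    (hsucc : zcard κp = Order.succ (zcard κ))
    (hmono : ∀ p q A, p ∈ CohenCond κ κp → q ∈ CohenCond κ κp → p ⊆ q →
      Force p A → Force q A)
    (hdec : ∀ p ∈ CohenCond κ κp, ∀ A : ZFSet.{u}, A ⊆ κ →
      ∃ q ∈ CohenCond κ κp, p ⊆ q ∧ (Force q A ∨ Force q (κ \ A)))
    (hstat : ∀ p ∈ CohenCond κ κp, ∀ A : ZFSet.{u}, Force p A → A ⊆ κ ∧ IsStatZ' κ A.toSet)
    (hinter : ∀ p ∈ CohenCond κ κp, ∀ A B : ZFSet.{u}, Force p A → Force p B →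
      Force p (A ∩ B))
    {Ms : ZFSet.{u} → Set ZFSet.{u}} {i : ZFSet.{u}} (hi : i ∈ κp)
    (hMs : ∀ j, (j ∈ i ∨ j = i) → #(Ms j) ≤ zcard κ) :
    JudgeLegalAt κ Ms (fun b => judgeStrategy Force κ κp b (restrLe Ms b)) i := by
  have hspec (j) (hj : j ∈ i ∨ j = i) := judgeCond_spec Force hκ hinf hκp hsucc hmono hdec
    (hj.elim (hκp.1.mem_trans · hi) (· ▸ hi)) fun k hk =>
      hMs k (hk.elim (fun hk => Or.inl (hj.elim ((hκp.1.mem hi).mem_trans hk) (· ▸ hk)))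
        fun hk => hk ▸ hj)
  obtain ⟨hmem, hsub, hdecides⟩ := hspec i (Or.inr rfl)
  refine ⟨isZFilter_of_forces hκ hinf hreg hstat hinter fun n A hA => ⟨_, hmem, hA⟩,
    hdecides, fun j hj A hA => hmono _ _ A (hspec j (Or.inl hj)).1 hmem (hsub j hj) hA⟩

theorem exists_judgeCond_forces {κ κp : ZFSet.{u}} (Force : ZFSet.{u} → ZFSet.{u} → Prop)
    (hκ : IsCardZ κ) (hinf : ℵ₀ ≤ zcard κ) (hκp : IsCardZ κp)
    (hsucc : zcard κp = Order.succ (zcard κ))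
    (hmono : ∀ p q A, p ∈ CohenCond κ κp → q ∈ CohenCond κ κp → p ⊆ q →
      Force p A → Force q A)
    (hdec : ∀ p ∈ CohenCond κ κp, ∀ A : ZFSet.{u}, A ⊆ κ →
      ∃ q ∈ CohenCond κ κp, p ⊆ q ∧ (Force q A ∨ Force q (κ \ A)))
    {Ms : ZFSet.{u} → Set ZFSet.{u}} (hMs : ∀ j ∈ κp, #(Ms j) ≤ zcard κ)
    {α : Type (u + 1)} (hα : #α ≤ zcard κ) (A : α → ZFSet.{u})
    (hA : ∀ a, A a ∈ ⋃ i ∈ κp.toSet, judgeStrategy Force κ κp i (restrLe Ms i)) :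
    ∃ i ∈ κp, judgeCond Force κ κp i (restrLe Ms i) ∈ CohenCond κ κp ∧
      ∀ a, Force (judgeCond Force κ κp i (restrLe Ms i)) (A a) := by
  have hspec {i} (hi : i ∈ κp) := judgeCond_spec Force hκ hinf hκp hsucc hmono hdec hi
    fun j hj => hMs j (hj.elim (hκp.1.mem_trans · hi) (· ▸ hi))
  choose ι hι hιA using fun a => Set.mem_iUnion₂.1 (hA a)
  obtain ⟨i, hi, hbound⟩ := exists_bound_of_mk_le_of_eq_succ hκp hsucc hinf ι hα hι
  refine ⟨i, hi, (hspec hi).1, fun a => ?_⟩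
  rcases ((hκp.1.mem (hι a)).subset_iff_eq_or_mem (hκp.1.mem hi)).1 (hbound a) with h | h
  · exact h ▸ hιA a
  · exact hmono _ _ _ (hspec (hι a)).1 (hspec hi).1 ((hspec hi).2.1 _ h) (hιA a)

theorem judgeWinsRun_judgeStrategy {κ κp : ZFSet.{u}} (Force : ZFSet.{u} → ZFSet.{u} → Prop)
    (hκ : IsCardZ κ) (hinf : ℵ₀ ≤ zcard κ) (hreg : (zcard κ).IsRegular) (hκp : IsCardZ κp)
    (hsucc : zcard κp = Order.succ (zcard κ))
    (hmono : ∀ p q A, p ∈ CohenCond κ κp → q ∈ CohenCond κ κp → p ⊆ q →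
      Force p A → Force q A)
    (hdec : ∀ p ∈ CohenCond κ κp, ∀ A : ZFSet.{u}, A ⊆ κ →
      ∃ q ∈ CohenCond κ κp, p ⊆ q ∧ (Force q A ∨ Force q (κ \ A)))
    (hstat : ∀ p ∈ CohenCond κ κp, ∀ A : ZFSet.{u}, Force p A → A ⊆ κ ∧ IsStatZ' κ A.toSet)
    (hinter : ∀ p ∈ CohenCond κ κp, ∀ A B : ZFSet.{u}, Force p A → Force p B →
      Force p (A ∩ B))
    (hdiag : ∀ p ∈ CohenCond κ κp, ∀ m : ZFSet.{u},
      ((∃ y, ZFSet.IsFunc κ y m) ∧ ∀ b v, b ∈ κ → ZFSet.pair b v ∈ m → Force p v) →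
      Force p (diagZ κ m))
    {Ms : ZFSet.{u} → Set ZFSet.{u}} (hMs : ∀ j ∈ κp, #(Ms j) ≤ zcard κ) :
    JudgeWinsRun κ κp Ms (fun b => judgeStrategy Force κ κp b (restrLe Ms b)) := by
  have hforces {α : Type (u + 1)} (hα : #α ≤ zcard κ) :=
    exists_judgeCond_forces Force hκ hinf hκp hsucc hmono hdec hMs hα
  refine ⟨isZFilter_of_forces hκ hinf hreg hstat hinter fun n A hA => ?_, fun A hA hAκ => ?_,
    fun m _ ⟨⟨y, hm⟩, hvals⟩ => ?_⟩
  · obtain ⟨i, -, hmem, hiA⟩ := hforces ((lt_aleph0_of_finite _).le.trans hinf)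
      (fun k : ULift (Fin n) => A k.down) fun k => hA k.down
    exact ⟨_, hmem, fun k => hiA ⟨k⟩⟩
  · obtain ⟨i, hi, hAi⟩ := Set.mem_iUnion₂.1 hA
    have hdecides := (judgeCond_spec Force hκ hinf hκp hsucc hmono hdec hi
      fun j hj => hMs j (hj.elim (hκp.1.mem_trans · hi) (· ▸ hi))).2.2 A hAi hAκ
    exact hdecides.imp (Set.mem_iUnion₂.2 ⟨i, hi, ·⟩) (Set.mem_iUnion₂.2 ⟨i, hi, ·⟩)
  · choose v hv using fun b : κ.toSet => (hm.2 b b.2).exists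
    obtain ⟨i, hi, hmem, hiv⟩ := hforces le_rfl v fun b => hvals b (v b) b.2 (hv b)
    refine Set.mem_iUnion₂.2 ⟨i, hi, hdiag _ hmem m ⟨⟨y, hm⟩, fun b w hb hbw => ?_⟩⟩
    exact (hm.2 b hb).unique (hv ⟨b, hb⟩) hbw ▸ hiv ⟨b, hb⟩

/-- **Proposition 8.2** (Hamkins, in Holy–Schlicht). Suppose that `κ` is not measurable,
but becomes measurable after forcing with `Add(κ⁺, 1)` — the latter hypothesis being
rendered by the existence of a (name for a) normal measure `U̇` on `κ`, i.e. a relation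
`Force p A` ("`p ⊩ Ǎ ∈ U̇`") on Cohen conditions which is monotone, decides every subset
of `κ`, is consistent, forces only stationary subsets of `κ`, and is closed under
intersections and diagonal intersections.  Then the judge has a winning strategy in the
filter game of length `κ⁺` on `κ`, i.e. `κ` has the strategic `κ⁺`-filter property;
consequently the strategic `κ⁺`-filter property at `κ` does not imply that `κ` is
measurable. -/
theorem strategic_filter_property_not_measurable (κ κp : ZFSet.{u})
    (hκ : IsCardZ κ) (hunc : Cardinal.aleph0 < zcard κ)
    (hreg : (zcard κ).IsRegular) (hκp : IsCardZ κp) (hsucc : zcard κp = Order.succ (zcard κ))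
    (hnotmeas : ¬ MeasurableZ κ)
    (hname : ∃ Force : ZFSet.{u} → ZFSet.{u} → Prop,
      (∀ p q A, p ∈ CohenCond κ κp → q ∈ CohenCond κ κp → p ⊆ q →
        Force p A → Force q A) ∧
      (∀ p ∈ CohenCond κ κp, ∀ A : ZFSet.{u}, A ⊆ κ →
        ∃ q ∈ CohenCond κ κp, p ⊆ q ∧ (Force q A ∨ Force q (κ \ A))) ∧
      (∀ p ∈ CohenCond κ κp, ∀ A : ZFSet.{u}, A ⊆ κ →
        ¬ (Force p A ∧ Force p (κ \ A))) ∧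
      (∀ p ∈ CohenCond κ κp, ∀ A : ZFSet.{u}, Force p A → A ⊆ κ ∧ IsStatZ' κ A.toSet) ∧
      (∀ p ∈ CohenCond κ κp, ∀ A B : ZFSet.{u}, Force p A → Force p B →
        Force p (A ∩ B)) ∧
      (∀ p ∈ CohenCond κ κp, ∀ m : ZFSet.{u},
        ((∃ y, ZFSet.IsFunc κ y m) ∧ ∀ b v, b ∈ κ → ZFSet.pair b v ∈ m → Force p v) →
        Force p (diagZ κ m))) :
    StratFilterPropZ κ κp ∧ ¬ MeasurableZ κ := by
  obtain ⟨Force, hmono, hdec, -, hstat, hinter, hdiag⟩ := hname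
  refine ⟨fun θ _ _ => ⟨judgeStrategy Force κ κp, fun Ms => ⟨fun i hi hchal => ?_, fun hall => ?_⟩⟩,
    hnotmeas⟩
  · exact judgeLegalAt_judgeStrategy Force hκ hunc.le hreg hκp hsucc hmono hdec hstat hinter hi
      fun j hj => (hchal j hj).2.1.1.1.le
  · exact judgeWinsRun_judgeStrategy Force hκ hunc.le hreg hκp hsucc hmono hdec hstat hinter hdiag
      fun j hj => (hall j hj).2.1.1.1.le
end
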